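/- arXiv:2502.14858 — 8 statements merged into one kernel-verified Lean document; each statement's English description precedes it below -/
import Mathlib

section
/- Let R be a commutative ring, π ∈ R, and f : M → N a homomorphism of R-modules. Assume that for every n ∈ ℕ the cokernel of the induced map M/π^nM → N/π^nN is annihilated by π. Then the cokernel of the induced map f̂ : M̂ → N̂ between the π-adic completions is annihilated by π. -/
/-!
Represent `y` by a Cauchy sequence `(bₙ)` and build `aₙ ∈ M` with
`π bₙ₊₁ ≡ f aₙ (mod πⁿ⁺¹ N)` and `aₙ₊₁ ≡ aₙ (mod πⁿ M)`. If `π bₙ₊₂ - f aₙ = πⁿ⁺¹ t` and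
`π t = f u + π² s`, then `aₙ₊₁ = aₙ + πⁿ u` gains one power of `π` in the error. The limit of
`(aₙ)` then maps to `π y`.
-/

theorem Submodule.mem_span_singleton_pow_smul_top_iff {R N : Type*} [CommRing R] [AddCommGroup N]
    [Module R N] (π : R) {n : ℕ} {z : N} :
    z ∈ (Ideal.span {π} ^ n • ⊤ : Submodule R N) ↔ ∃ t : N, π ^ n • t = z := by
  simp [Ideal.span_singleton_pow, ideal_span_singleton_smul, mem_smul_pointwise_iff_exists]

namespace AdicCompletion

section

variable {R : Type*} [CommRing R] {I : Ideal R}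
variable {M N : Type*} [AddCommGroup M] [Module R M] [AddCommGroup N] [Module R N]

theorem map_mk_eq_smul_mk {f : M →ₗ[R] N} {r : R} {a : AdicCauchySequence I M}
    {b : AdicCauchySequence I N} (h : ∀ n, r • b n - f (a n) ∈ (I ^ n • ⊤ : Submodule R N)) :
    map I f (mk I M a) = r • mk I N b := by
  ext n
  simpa [val_smul_apply, ← Submodule.Quotient.mk_smul, Submodule.Quotient.eq, neg_sub]
    using neg_mem (h n)

theorem AdicCauchySequence.smul_succ_sub_mem_iff (b : AdicCauchySequence I N) (r : R) {n : ℕ}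
    {x : N} :
    r • b (n + 1) - x ∈ (I ^ n • ⊤ : Submodule R N) ↔ r • b n - x ∈ (I ^ n • ⊤ : Submodule R N) := by
  have hb : r • b n ≡ r • b (n + 1) [SMOD (I ^ n • ⊤ : Submodule R N)] :=
    (b.property n.le_succ).smul r
  rw [← SModEq.sub_mem, ← SModEq.sub_mem]
  exact ⟨hb.trans, hb.symm.trans⟩

end

variable {R : Type*} [CommRing R] (π : R)
variable {M N : Type*} [AddCommGroup M] [Module R M] [AddCommGroup N] [Module R N]

theorem exists_add_pow_smul_sub_mem {f : M →ₗ[R] N}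
    (h : ∀ y : N, ∃ x : M, π • y - f x ∈ (Ideal.span {π} ^ 2 • ⊤ : Submodule R N))
    {n : ℕ} {z : N} {a : M} (hz : z - f a ∈ (Ideal.span {π} ^ (n + 1) • ⊤ : Submodule R N)) :
    ∃ u : M, z - f (a + π ^ n • u) ∈ (Ideal.span {π} ^ (n + 2) • ⊤ : Submodule R N) := by
  obtain ⟨t, ht⟩ := (Submodule.mem_span_singleton_pow_smul_top_iff π).1 hz
  obtain ⟨u, hu⟩ := h t
  obtain ⟨s, hs⟩ := (Submodule.mem_span_singleton_pow_smul_top_iff π).1 hu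
  refine ⟨u, (Submodule.mem_span_singleton_pow_smul_top_iff π).2 ⟨s, ?_⟩⟩
  calc π ^ (n + 2) • s = π ^ n • (π • t - f u) := by rw [← hs, smul_smul, ← pow_add]
    _ = (z - f a) - π ^ n • f u := by rw [← ht, smul_sub, smul_smul, ← pow_succ]
    _ = z - f (a + π ^ n • u) := by rw [map_add, map_smul, sub_sub]

theorem exists_adicCauchySequence_smul_sub_mem {f : M →ₗ[R] N}
    (h : ∀ y : N, ∃ x : M, π • y - f x ∈ (Ideal.span {π} ^ 2 • ⊤ : Submodule R N))
    (b : AdicCauchySequence (Ideal.span {π}) N) :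
    ∃ a : AdicCauchySequence (Ideal.span {π}) M,
      ∀ n, π • b n - f (a n) ∈ (Ideal.span {π} ^ n • ⊤ : Submodule R N) := by
  have step : ∀ n a, ∃ u : M,
      π • b (n + 1) - f a ∈ (Ideal.span {π} ^ (n + 1) • ⊤ : Submodule R N) →
        π • b (n + 2) - f (a + π ^ n • u) ∈ (Ideal.span {π} ^ (n + 2) • ⊤ : Submodule R N) := by
    intro n a
    by_cases ha : π • b (n + 1) - f a ∈ (Ideal.span {π} ^ (n + 1) • ⊤ : Submodule R N)
    · obtain ⟨u, hu⟩ := exists_add_pow_smul_sub_mem π h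
        ((AdicCauchySequence.smul_succ_sub_mem_iff b π).2 ha)
      exact ⟨u, fun _ => hu⟩
    · exact ⟨0, fun ha' => (ha ha').elim⟩
  choose u hu using step
  let a : ℕ → M := fun n => Nat.rec 0 (fun k ak => ak + π ^ k • u k ak) n
  have ha : ∀ n, π • b (n + 1) - f (a n) ∈ (Ideal.span {π} ^ (n + 1) • ⊤ : Submodule R N) := by
    intro n
    induction n with
    | zero => exact (Submodule.mem_span_singleton_pow_smul_top_iff π).2 ⟨b 1, by simp [a]⟩
    | succ n ih => exact hu n (a n) ih
  refine ⟨AdicCauchySequence.mk _ M a fun n => ?_, fun n => ?_⟩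
  · rw [SModEq.sub_mem]
    exact (Submodule.mem_span_singleton_pow_smul_top_iff π).2 ⟨-u n (a n), by simp [a]⟩
  · rw [← AdicCauchySequence.smul_succ_sub_mem_iff]
    exact Submodule.smul_mono_left (Ideal.pow_le_pow_right n.le_succ) (ha n)

end AdicCompletion

/-- Let `R` be a commutative ring, `π ∈ R`, and `f : M → N` a homomorphism of
`R`-modules.  Assume that for every `n ∈ ℕ` the cokernel of the induced map
`M/π^nM → N/π^nN` is annihilated by `π`.  Then the cokernel of the induced map between the
`π`-adic completions is annihilated by `π`. -/
theorem statement0 {R : Type*} [CommRing R] (π : R)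
    {M N : Type*} [AddCommGroup M] [Module R M] [AddCommGroup N] [Module R N]
    (f : M →ₗ[R] N)
    (h : ∀ n : ℕ, ∀ y : N, ∃ x : M,
      π • y - f x ∈ ((Ideal.span {π}) ^ n • (⊤ : Submodule R N))) :
    ∀ y : AdicCompletion (Ideal.span {π}) N,
      ∃ x : AdicCompletion (Ideal.span {π}) M,
        AdicCompletion.map (Ideal.span {π}) f x = π • y := by
  intro y
  obtain ⟨b, rfl⟩ := AdicCompletion.mk_surjective _ N y
  obtain ⟨a, ha⟩ := AdicCompletion.exists_adicCauchySequence_smul_sub_mem π (h 2) b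
  exact ⟨_, AdicCompletion.map_mk_eq_smul_mk ha⟩
end

section
/- Let R be a commutative ring, π ∈ R, c ∈ ℕ, and 0 → N → M → Q → 0 a short exact sequence of R-modules such that every element of Q annihilated by some power of π is annihilated by π^c. Then the induced sequence of π-adic completions 0 → N̂ → M̂ → Q̂ → 0 is exact. In particular, if the canonical maps N → N̂ and Q → Q̂ are bijective, then so is the canonical map M → M̂. -/
open LinearMap Submodule

namespace Statement1Aux

section Inj
variable {R : Type*} [CommRing R]
variable {M : Type*} [AddCommGroup M] [Module R M]
variable {N : Type*} [AddCommGroup N] [Module R N]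

/-- Adic completion preserves injectivity, given an Artin-Rees style bound. -/
theorem map_injective' (I : Ideal R) {f : M →ₗ[R] N} (hf : Function.Injective f)
    {k : ℕ}
    (hk : ∀ n ≥ k, I ^ n • ⊤ ⊓ LinearMap.range f
      = I ^ (n - k) • (I ^ k • ⊤ ⊓ LinearMap.range f)) :
    Function.Injective (AdicCompletion.map I f) := by
  rw [← LinearMap.ker_eq_bot, LinearMap.ker_eq_bot']
  intro x
  apply AdicCompletion.induction_on I M x (fun a ↦ ?_)
  intro hx
  refine AdicCompletion.mk_zero_of _ _ _ ⟨42, fun n _ ↦ ⟨n + k, by omega, n, by omega, ?_⟩⟩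
  rw [← Submodule.comap_map_eq_of_injective hf (I ^ n • ⊤ : Submodule R M),
    Submodule.map_smul'', Submodule.map_top]
  apply (smul_mono_right _ inf_le_right : I ^ n • (I ^ k • ⊤ ⊓ range f) ≤ _)
  nth_rw 1 [show n = n + k - k by omega]
  rw [← hk (n + k) (show n + k ≥ k by omega)]
  exact ⟨by simpa using congrArg (fun x ↦ x.val (n + k)) hx, ⟨a (n + k), rfl⟩⟩

end Inj

section Exact
variable {R : Type*} [CommRing R] {I : Ideal R}
variable {M : Type*} [AddCommGroup M] [Module R M]
variable {N : Type*} [AddCommGroup N] [Module R N]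
variable {P : Type*} [AddCommGroup P] [Module R P]

variable {f : M →ₗ[R] N} {g : N →ₗ[R] P} (hf : Function.Injective f)
  (hfg : Function.Exact f g) (hg : Function.Surjective g)

section

variable {k : ℕ}
  (hkn : ∀ n ≥ k, I ^ n • ⊤ ⊓ LinearMap.range f = I ^ (n - k) • (I ^ k • ⊤ ⊓ LinearMap.range f))
  (x : AdicCompletion.AdicCauchySequence I N)
  (hker : ∀ (n : ℕ), g (x n) ∈ (I ^ n • ⊤ : Submodule R P))

open AdicCompletion

noncomputable def mapExactAuxDelta' {n : ℕ} {d : N}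
    (hdmem : d ∈ (I ^ (k + n + 1) • ⊤ : Submodule R N)) {y yₙ : M}
    (hd : f y = x (k + n + 1) - d) (hyₙ : f yₙ - x (k + n) ∈ (I ^ (k + n) • ⊤ : Submodule R N)) :
    { d : (I ^ n • ⊤ : Submodule R M)
      | f (yₙ + d) - x (k + n + 1) ∈ (I ^ (k + n + 1) • ⊤ : Submodule R N) } :=
  have h : f (y - yₙ) ∈ (I ^ (k + n) • ⊤ : Submodule R N) := by
    simp only [map_sub, hd]
    convert_to x (k + n + 1) - x (k + n) - d - (f yₙ - x (k + n)) ∈ I ^ (k + n) • ⊤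
    · abel
    · refine Submodule.sub_mem _ (Submodule.sub_mem _ ?_ ?_) hyₙ
      · rw [← Submodule.Quotient.eq]
        exact AdicCauchySequence.mk_eq_mk (by omega) _
      · exact (Submodule.smul_mono_left (Ideal.pow_le_pow_right (by omega))) hdmem
  have hincl : I ^ (k + n - k) • (I ^ k • ⊤ ⊓ range f) ≤ I ^ (k + n - k) • (range f) :=
    smul_mono_right _ inf_le_right
  have hyyₙ : y - yₙ ∈ (I ^ n • ⊤ : Submodule R M) := by
    convert_to y - yₙ ∈ (I ^ (k + n - k) • ⊤ : Submodule R M)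
    · simp
    · rw [← Submodule.comap_map_eq_of_injective hf (I ^ (k + n - k) • ⊤ : Submodule R M),
        Submodule.map_smul'', Submodule.map_top]
      apply hincl
      rw [← hkn (k + n) (by omega)]
      exact ⟨h, ⟨y - yₙ, rfl⟩⟩
  ⟨⟨y - yₙ, hyyₙ⟩, by simpa [hd, Nat.succ_eq_add_one, Nat.add_assoc]⟩

include hfg in
noncomputable def mapExactAux' :
    (n : ℕ) → { a : M | f a - x (k + n) ∈ (I ^ (k + n) • ⊤ : Submodule R N) }
  | .zero =>
      let d := (h2 0).choose
      let y := (h2 0).choose_spec.choose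
      have hdy : f y = x (k + 0) - d := (h2 0).choose_spec.choose_spec.right
      have hdmem := (h2 0).choose_spec.choose_spec.left
      ⟨y, by simpa [hdy]⟩
  | .succ n =>
      let d := (h2 <| n + 1).choose
      let y := (h2 <| n + 1).choose_spec.choose
      have hdy : f y = x (k + (n + 1)) - d := (h2 <| n + 1).choose_spec.choose_spec.right
      have hdmem := (h2 <| n + 1).choose_spec.choose_spec.left
      let ⟨yₙ, (hyₙ : f yₙ - x (k + n) ∈ (I ^ (k + n) • ⊤ : Submodule R N))⟩ :=
        mapExactAux' n
      let ⟨d, hd⟩ := mapExactAuxDelta' hf hkn x hdmem hdy hyₙ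
      ⟨yₙ + d, hd⟩
 where
  h1 (n : ℕ) : g (x (k + n)) ∈ Submodule.map g (I ^ (k + n) • ⊤ : Submodule R N) := by
    rw [map_smul'', Submodule.map_top, range_eq_top.mpr hg]
    exact hker (k + n)
  h2 (n : ℕ) : ∃ (d : N) (y : M),
      d ∈ (I ^ (k + n) • ⊤ : Submodule R N) ∧ f y = x (k + n) - d := by
    obtain ⟨d, hdmem, hd⟩ := h1 n
    obtain ⟨y, hdy⟩ := (hfg (x (k + n) - d)).mp (by simp [hd])
    exact ⟨d, y, hdmem, hdy⟩

end

include hf hfg hg in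
/-- Adic completion is exact, given an Artin-Rees style bound. -/
theorem map_exact' {k : ℕ}
    (hk : ∀ n ≥ k, I ^ n • ⊤ ⊓ LinearMap.range f
      = I ^ (n - k) • (I ^ k • ⊤ ⊓ LinearMap.range f)) :
    Function.Exact (AdicCompletion.map I f) (AdicCompletion.map I g) := by
  refine LinearMap.exact_of_comp_eq_zero_of_ker_le_range ?_ (fun y ↦ ?_)
  · rw [AdicCompletion.map_comp, hfg.linearMap_comp_eq_zero, AdicCompletion.map_zero]
  · apply AdicCompletion.induction_on I N y (fun b ↦ ?_)
    intro hz
    have hb (n : ℕ) : g (b n) ∈ (I ^ n • ⊤ : Submodule R P) := by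
      simpa using congrArg (fun x ↦ x.val n) hz
    let a := mapExactAux' hf hfg hg hk b hb
    refine ⟨AdicCompletion.mk I M (AdicCompletion.AdicCauchySequence.mk I M
      (fun n ↦ (a n : M)) ?_), ?_⟩
    · refine fun n ↦ SModEq.symm ?_
      simp [a, mapExactAux', SModEq]
    · ext n
      suffices h : Submodule.Quotient.mk (p := (I ^ n • ⊤ : Submodule R N)) (f (a n)) =
            Submodule.Quotient.mk (p := (I ^ n • ⊤ : Submodule R N)) (b (k + n)) by
        simp [h, AdicCompletion.AdicCauchySequence.mk_eq_mk (show n ≤ k + n by omega)]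
      rw [Submodule.Quotient.eq]
      have hle : (I ^ (k + n) • ⊤ : Submodule R N) ≤ (I ^ n • ⊤ : Submodule R N) :=
        Submodule.smul_mono_left (Ideal.pow_le_pow_right (by omega))
      exact hle (a n).property

end Exact

section AR
variable {R : Type*} [CommRing R]
variable {N : Type*} [AddCommGroup N] [Module R N]
variable {M : Type*} [AddCommGroup M] [Module R M]
variable {Q : Type*} [AddCommGroup Q] [Module R Q]

/-- Bounded torsion of the cokernel gives the Artin-Rees style bound. -/
theorem artin_rees' {π : R} {c : ℕ} {f : N →ₗ[R] M} {g : M →ₗ[R] Q}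
    (hfg : Function.Exact f g)
    (hQ : ∀ q : Q, (∃ n : ℕ, π ^ n • q = 0) → π ^ c • q = 0) :
    ∀ n ≥ c, (Ideal.span {π}) ^ n • ⊤ ⊓ LinearMap.range f
      = (Ideal.span {π}) ^ (n - c) • ((Ideal.span {π}) ^ c • ⊤ ⊓ LinearMap.range f) := by
  intro n hn
  apply le_antisymm
  · rintro z ⟨hz1, hz2⟩
    rw [Ideal.span_singleton_pow, Submodule.ideal_span_singleton_smul] at hz1
    obtain ⟨m, -, rfl⟩ := Set.mem_smul_set.mp hz1
    have hgz : g (π ^ n • m) = 0 := by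
      obtain ⟨y, hy⟩ := hz2
      exact (hfg _).mpr ⟨y, hy⟩
    have hgm : π ^ c • g m = 0 := hQ (g m) ⟨n, by rw [← map_smul, hgz]⟩
    have hmem : π ^ c • m ∈ ((Ideal.span {π}) ^ c • ⊤ ⊓ LinearMap.range f : Submodule R M) := by
      constructor
      · rw [Ideal.span_singleton_pow, Submodule.ideal_span_singleton_smul]
        exact Submodule.smul_mem_pointwise_smul m _ ⊤ trivial
      · exact (hfg (π ^ c • m)).mp (by rw [map_smul, hgm])
    have : π ^ n • m = π ^ (n - c) • (π ^ c • m) := by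
      rw [smul_smul, ← pow_add, show n - c + c = n from by omega]
    rw [this, Ideal.span_singleton_pow, Submodule.ideal_span_singleton_smul]
    exact Submodule.smul_mem_pointwise_smul _ _ _ hmem
  · apply le_inf
    · calc (Ideal.span {π}) ^ (n - c) • ((Ideal.span {π}) ^ c • ⊤ ⊓ LinearMap.range f)
          ≤ (Ideal.span {π}) ^ (n - c) • ((Ideal.span {π}) ^ c • (⊤ : Submodule R M)) :=
            smul_mono_right _ inf_le_left
        _ = (Ideal.span {π}) ^ n • ⊤ := by
            rw [← Submodule.smul_assoc, smul_eq_mul, ← pow_add,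
              show n - c + c = n from by omega]
    · calc (Ideal.span {π}) ^ (n - c) • ((Ideal.span {π}) ^ c • ⊤ ⊓ LinearMap.range f)
          ≤ (Ideal.span {π}) ^ (n - c) • LinearMap.range f := smul_mono_right _ inf_le_right
        _ ≤ LinearMap.range f := Submodule.smul_le_right

/-- Naturality of the map to the adic completion. -/
theorem map_of' (I : Ideal R) (f : N →ₗ[R] M) (x : N) :
    AdicCompletion.map I f (AdicCompletion.of I N x) = AdicCompletion.of I M (f x) := by
  ext n
  simp

end AR

end Statement1Aux

open Statement1Aux in
/-- Let `R` be a commutative ring, `π ∈ R`, `c ∈ ℕ`, and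
`0 → N → M → Q → 0` a short exact sequence of `R`-modules such that every element of `Q`
annihilated by some power of `π` is annihilated by `π^c`.  Then the induced sequence of
`π`-adic completions `0 → N̂ → M̂ → Q̂ → 0` is exact.  In particular, if the canonical maps
`N → N̂` and `Q → Q̂` are bijective, then so is the canonical map `M → M̂`. -/
theorem statement1 {R : Type*} [CommRing R] (π : R) (c : ℕ)
    {N M Q : Type*} [AddCommGroup N] [Module R N] [AddCommGroup M] [Module R M]
    [AddCommGroup Q] [Module R Q]
    (f : N →ₗ[R] M) (g : M →ₗ[R] Q)
    (hf : Function.Injective f) (hg : Function.Surjective g)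
    (hfg : Function.Exact f g)
    (hQ : ∀ q : Q, (∃ n : ℕ, π ^ n • q = 0) → π ^ c • q = 0) :
    Function.Injective (AdicCompletion.map (Ideal.span {π}) f) ∧
    Function.Surjective (AdicCompletion.map (Ideal.span {π}) g) ∧
    Function.Exact (AdicCompletion.map (Ideal.span {π}) f)
      (AdicCompletion.map (Ideal.span {π}) g) ∧
    (Function.Bijective (AdicCompletion.of (Ideal.span {π}) N) →
      Function.Bijective (AdicCompletion.of (Ideal.span {π}) Q) →
      Function.Bijective (AdicCompletion.of (Ideal.span {π}) M)) := by
  set I := Ideal.span {π} with hI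
  have hk := artin_rees' hfg hQ
  have hinj : Function.Injective (AdicCompletion.map I f) := map_injective' I hf hk
  have hsurj : Function.Surjective (AdicCompletion.map I g) :=
    AdicCompletion.map_surjective I hg
  have hexact : Function.Exact (AdicCompletion.map I f) (AdicCompletion.map I g) :=
    map_exact' hf hfg hg hk
  refine ⟨hinj, hsurj, hexact, fun hN hQ' ↦ ⟨?_, ?_⟩⟩
  · rw [← LinearMap.ker_eq_bot, LinearMap.ker_eq_bot']
    intro z hz
    have h1 : AdicCompletion.of I Q (g z) = 0 := by
      rw [← map_of', hz, map_zero]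
    have h2 : g z = 0 := by
      have := hQ'.injective (a₁ := g z) (a₂ := 0) (by simpa using h1)
      simpa using this
    obtain ⟨w, hw⟩ := (hfg z).mp h2
    have h3 : AdicCompletion.map I f (AdicCompletion.of I N w) = 0 := by
      rw [map_of', hw, hz]
    have h4 : AdicCompletion.of I N w = 0 := hinj (by simpa using h3)
    have h5 : w = 0 := by
      have := hN.injective (a₁ := w) (a₂ := 0) (by simpa using h4)
      simpa using this
    rw [← hw, h5, map_zero]
  · intro m
    obtain ⟨q, hq⟩ := hQ'.surjective (AdicCompletion.map I g m)
    obtain ⟨x, hx⟩ := hg q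
    have h1 : AdicCompletion.map I g (m - AdicCompletion.of I M x) = 0 := by
      rw [map_sub, map_of', hx, hq, sub_self]
    obtain ⟨nhat, hn⟩ := (hexact _).mp h1
    obtain ⟨w, hw⟩ := hN.surjective nhat
    refine ⟨x + f w, ?_⟩
    rw [map_add, ← map_of', hw, hn]
    abel
end

section
/- Let K be a valuation field whose value group K^×/O_K^× is isomorphic, as a linearly ordered abelian group, to (ℝ, +, ≤); equivalently, there is a multiplicative ultrametric valuation v : K → ℝ≥0 with valuation ring O_K and v(K^×) = ℝ_{>0}. Then every torsion-free O_K-module M of rank 1 is isomorphic, as an O_K-module, to exactly one of the three O_K-modules K, O_K, m_K; in particular, no two of K, O_K, m_K are isomorphic as O_K-modules. -/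
/-!
Tensoring with `K` embeds a torsion-free module of rank one into `K`, so `M` is isomorphic to a
nonzero `O_K`-submodule `N ⊆ K`. Such an `N` is determined by its set of values: it contains
every `y` with `v y ≤ v x` for some `x ∈ N`. Hence `N = K` if `v(N)` is unbounded; otherwise
`sup v(N) = v z` for some `z` (as `v` is onto `ℝ>0`), and `N = O_K z ≅ O_K` or `N = m_K z ≅ m_K`
according as the supremum is attained or not. The three modules are pairwise non-isomorphic:
`K` is divisible while a nonzero ideal of a non-field is not, and `m_K` is not principal since the
value group is dense.
-/

open TensorProduct IsLocalRing

section RankOne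

variable {R K M : Type*} [CommRing R] [IsDomain R] [Field K] [Algebra R K] [IsFractionRing R K]
  [AddCommGroup M] [Module R M] [Module.IsTorsionFree R M]

variable (R K M) in
theorem TensorProduct.mk_one_injective : Function.Injective (TensorProduct.mk R K M 1) := by
  have : IsLocalizedModule (nonZeroDivisors R) (TensorProduct.mk R K M 1) :=
    (isLocalizedModule_iff_isBaseChange _ K _).mpr (TensorProduct.isBaseChange R M K)
  exact (IsLocalizedModule.injective_iff_isRegular (nonZeroDivisors R) _).mpr fun c ↦
    IsSMulRegular.of_ne_zero (nonZeroDivisors.coe_ne_zero c)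

theorem exists_submodule_linearEquiv_of_rank_eq_one (hrank : Module.rank K (K ⊗[R] M) = 1) :
    ∃ N : Submodule R K, N ≠ ⊥ ∧ Nonempty (M ≃ₗ[R] N) := by
  obtain ⟨g⟩ : Nonempty ((K ⊗[R] M) ≃ₗ[K] K) :=
    nonempty_linearEquiv_of_lift_rank_eq (by simp [hrank])
  set φ : M →ₗ[R] K := (g.restrictScalars R).toLinearMap ∘ₗ TensorProduct.mk R K M 1
  have hφ : Function.Injective φ := g.injective.comp (TensorProduct.mk_one_injective R K M)
  have : Nontrivial M := not_subsingleton_iff_nontrivial.mp fun _ ↦ by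
    simp [rank_subsingleton'] at hrank
  obtain ⟨m, hm⟩ := exists_ne (0 : M)
  refine ⟨LinearMap.range φ, (Submodule.ne_bot_iff _).mpr ⟨φ m, ⟨m, rfl⟩, ?_⟩,
    ⟨LinearEquiv.ofInjective φ hφ⟩⟩
  exact (map_ne_zero_iff φ hφ).mpr hm

end RankOne

section Ideal

variable {R : Type*} [CommRing R]

theorem Ideal.isPrincipal_of_linearEquiv {I : Ideal R} (e : R ≃ₗ[R] I) : I.IsPrincipal := by
  refine ⟨(e 1 : R), le_antisymm (fun y hy ↦ ?_) ?_⟩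
  · refine Submodule.mem_span_singleton.mpr ⟨e.symm ⟨y, hy⟩, ?_⟩
    calc e.symm ⟨y, hy⟩ * (e 1 : R) = ((e.symm ⟨y, hy⟩ • e 1 : I) : R) := rfl
      _ = y := by rw [← map_smul, smul_eq_mul, mul_one, e.apply_symm_apply]
  · exact (Submodule.span_singleton_le_iff_mem _ _).mpr (e 1).2

variable [IsDomain R] {K : Type*} [Field K] [Algebra R K] [IsFractionRing R K]

theorem isEmpty_linearEquiv_ideal_of_ne_bot {t : R} (ht0 : t ≠ 0) (ht : ¬IsUnit t)
    {I : Ideal R} (hI : I ≠ ⊥) : IsEmpty (K ≃ₗ[R] I) := by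
  refine ⟨fun e ↦ ?_⟩
  obtain ⟨a, haI, ha0⟩ := Submodule.exists_mem_ne_zero_of_ne_bot hI
  have hat : algebraMap R K (a * t) ≠ 0 :=
    (map_ne_zero_iff _ (IsFractionRing.injective R K)).mpr (mul_ne_zero ha0 ht0)
  -- `e.symm a` is divisible by `a * t` in `K`, hence `a` by `a * t` in `I`
  set y := (algebraMap R K (a * t))⁻¹ * e.symm ⟨a, haI⟩
  have hy : (a * t) • y = e.symm ⟨a, haI⟩ := by
    rw [Algebra.smul_def, ← mul_assoc, mul_inv_cancel₀ hat, one_mul]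
  have hdiv : a * (t * (e y : R)) = a * 1 := by
    have := congrArg Subtype.val (congrArg e hy)
    simp only [map_smul, LinearEquiv.apply_symm_apply, Submodule.coe_smul, smul_eq_mul] at this
    rw [mul_one, ← mul_assoc, this]
  exact ht (IsUnit.of_mul_eq_one _ (mul_left_cancel₀ ha0 hdiv))

end Ideal

namespace Valuation

variable {K Γ₀ : Type*} [Field K] [LinearOrderedCommGroupWithZero Γ₀] {v : Valuation K Γ₀}
  {O : ValuationSubring K}

theorem integers_of_forall_le_one_iff (hv : ∀ x : K, v x ≤ 1 ↔ x ∈ O) :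
    v.Integers O where
  hom_inj := Subtype.val_injective
  map_le_one x := (hv x).mpr x.2
  exists_of_le_one x hx := ⟨⟨x, (hv x).mp hx⟩, rfl⟩

namespace Integers

theorem mem_maximalIdeal_iff (hO : v.Integers O) {r : O} : r ∈ maximalIdeal O ↔ v r < 1 := by
  rw [mem_maximalIdeal, mem_nonunits_iff, hO.isUnit_iff_valuation_eq_one]
  exact (hO.map_le_one r).lt_iff_ne.symm

theorem mem_of_valuation_le (hO : v.Integers O) {N : Submodule O K} {x y : K} (hx : x ∈ N)
    (h : v y ≤ v x) : y ∈ N := by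
  rcases eq_or_ne x 0 with rfl | hx0
  · rw [v.map_zero, le_zero_iff, v.zero_iff] at h
    exact h ▸ N.zero_mem
  obtain ⟨r, hr⟩ := hO.exists_of_le_one (r := y / x) (by
    rwa [map_div₀, div_le_one₀ (v.pos_iff.mpr hx0)])
  have : r • x = y := by
    rw [Algebra.smul_def, hr, div_mul_cancel₀ y hx0]
  exact this ▸ N.smul_mem r hx

theorem mem_span_singleton_iff (hO : v.Integers O) {y z : K} : y ∈ O ∙ z ↔ v y ≤ v z := by
  refine ⟨fun h ↦ ?_, hO.mem_of_valuation_le (Submodule.mem_span_singleton_self z)⟩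
  obtain ⟨r, rfl⟩ := Submodule.mem_span_singleton.mp h
  rw [Algebra.smul_def, v.map_mul]
  exact mul_le_of_le_one_left' (hO.map_le_one r)

theorem mem_map_maximalIdeal_iff (hO : v.Integers O) {y z : K} (hz : z ≠ 0) :
    y ∈ Submodule.map (LinearMap.toSpanSingleton O K z) (maximalIdeal O) ↔ v y < v z := by
  have hvz : 0 < v z := v.pos_iff.mpr hz
  simp only [Submodule.mem_map, LinearMap.toSpanSingleton_apply, Algebra.smul_def]
  constructor
  · rintro ⟨r, hr, rfl⟩
    rw [v.map_mul]
    exact mul_lt_of_lt_one_left hvz ((hO.mem_maximalIdeal_iff).mp hr)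
  · intro h
    obtain ⟨r, hr⟩ := hO.exists_of_le_one (r := y / z) (by
      rw [map_div₀]; exact div_le_one_of_le₀ h.le zero_le)
    refine ⟨r, hO.mem_maximalIdeal_iff.mpr ?_, by rw [hr, div_mul_cancel₀ y hz]⟩
    rwa [show (r : K) = y / z from hr, map_div₀, div_lt_one₀ hvz]

theorem eq_top_of_not_bddAbove (hO : v.Integers O) {N : Submodule O K}
    (h : ¬BddAbove (v '' N)) : N = ⊤ := by
  refine Submodule.eq_top_iff'.mpr fun y ↦ ?_
  obtain ⟨_, ⟨x, hx, rfl⟩, hlt⟩ := not_bddAbove_iff.mp h (v y)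
  exact hO.mem_of_valuation_le hx hlt.le

theorem eq_span_singleton_of_isGreatest (hO : v.Integers O) {N : Submodule O K} {z : K}
    (hz : z ∈ N) (h : IsGreatest (v '' N) (v z)) : N = O ∙ z := by
  ext y
  rw [hO.mem_span_singleton_iff]
  exact ⟨fun hy ↦ h.2 ⟨y, hy, rfl⟩, hO.mem_of_valuation_le hz⟩

theorem eq_map_maximalIdeal_of_isLUB (hO : v.Integers O) {N : Submodule O K} {z : K}
    (hz : z ≠ 0) (h : IsLUB (v '' N) (v z)) (hz' : v z ∉ v '' N) :
    N = Submodule.map (LinearMap.toSpanSingleton O K z) (maximalIdeal O) := by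
  ext y
  rw [hO.mem_map_maximalIdeal_iff hz]
  constructor
  · intro hy
    exact (h.1 ⟨y, hy, rfl⟩).lt_of_ne fun he ↦ hz' ⟨y, hy, he⟩
  · intro hy
    obtain ⟨_, ⟨x, hx, rfl⟩, hlt⟩ := (lt_isLUB_iff h).mp hy
    exact hO.mem_of_valuation_le hx hlt.le

end Integers

end Valuation

namespace Valuation.Integers

open NNReal

variable {K : Type*} [Field K] {v : Valuation K ℝ≥0} {O : ValuationSubring K}

theorem not_isPrincipal_maximalIdeal (hO : v.Integers O)
    (hsurj : ∀ r : ℝ≥0, 0 < r → ∃ x : K, x ≠ 0 ∧ v x = r) :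
    ¬(maximalIdeal O).IsPrincipal := by
  rw [hO.isPrincipal_iff_exists_isGreatest]
  rintro ⟨_, ⟨a, ha, rfl⟩, hmax⟩
  obtain ⟨c, hac, hc1⟩ := exists_between (hO.mem_maximalIdeal_iff.mp ha)
  obtain ⟨t, -, rfl⟩ := hsurj c (pos_of_gt hac)
  obtain ⟨r, rfl⟩ := hO.exists_of_le_one hc1.le
  exact (hmax ⟨r, hO.mem_maximalIdeal_iff.mpr hc1, rfl⟩).not_gt hac

theorem nonempty_linearEquiv_of_ne_bot (hO : v.Integers O)
    (hsurj : ∀ r : ℝ≥0, 0 < r → ∃ x : K, x ≠ 0 ∧ v x = r) {N : Submodule O K}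
    (hN : N ≠ ⊥) :
    Nonempty (N ≃ₗ[O] K) ∨ Nonempty (N ≃ₗ[O] O) ∨ Nonempty (N ≃ₗ[O] maximalIdeal O) := by
  by_cases hbdd : BddAbove (v '' N)
  swap
  · exact Or.inl ⟨LinearEquiv.ofTop N (hO.eq_top_of_not_bddAbove hbdd)⟩
  obtain ⟨x, hxN, hx0⟩ := Submodule.exists_mem_ne_zero_of_ne_bot hN
  have hlub : IsLUB (v '' N) (sSup (v '' N)) := isLUB_csSup ⟨v x, x, hxN, rfl⟩ hbdd
  have hpos : 0 < sSup (v '' N) := (v.pos_iff.mpr hx0).trans_le (hlub.1 ⟨x, hxN, rfl⟩)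
  by_cases hmax : sSup (v '' N) ∈ v '' N
  · obtain ⟨z, hzN, hz⟩ := hmax
    have hz0 : z ≠ 0 := v.pos_iff.mp (hz ▸ hpos)
    rw [← hz] at hlub
    have hN : N = O ∙ z := hO.eq_span_singleton_of_isGreatest hzN ⟨⟨z, hzN, rfl⟩, hlub.1⟩
    exact Or.inr (Or.inl
      ⟨(LinearEquiv.ofEq _ _ hN).trans (LinearEquiv.toSpanNonzeroSingleton O K z hz0).symm⟩)
  · obtain ⟨z, hz0, hz⟩ := hsurj _ hpos
    rw [← hz] at hlub hmax
    have hN := hO.eq_map_maximalIdeal_of_isLUB hz0 hlub hmax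
    exact Or.inr (Or.inr ⟨(LinearEquiv.ofEq _ _ hN).trans
      (Submodule.equivMapOfInjective _ (smul_left_injective O hz0) _).symm⟩)

end Valuation.Integers

/-- Let `K` be a valuation field whose value group is isomorphic to `(ℝ,+,≤)`;
equivalently, there is a multiplicative ultrametric valuation `v : K → ℝ≥0` with valuation ring
`O_K` and `v(K^×) = ℝ_{>0}`.  Then every torsion-free `O_K`-module `M` of rank `1` is isomorphic,
as an `O_K`-module, to exactly one of `K`, `O_K`, `m_K`; in particular, no two of `K`, `O_K`,
`m_K` are isomorphic as `O_K`-modules. -/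
theorem statement3 (K : Type*) [Field K] (OK : ValuationSubring K)
    (v : Valuation K NNReal) (hv : ∀ x : K, v x ≤ 1 ↔ x ∈ OK)
    (hsurj : ∀ r : NNReal, 0 < r → ∃ x : K, x ≠ 0 ∧ v x = r)
    (M : Type*) [AddCommGroup M] [Module ↥OK M]
    (htf : ∀ (r : ↥OK) (x : M), r • x = 0 → r = 0 ∨ x = 0)
    (hrank : Module.rank K (K ⊗[↥OK] M) = 1) :
    ((Nonempty (M ≃ₗ[↥OK] K) ∨ Nonempty (M ≃ₗ[↥OK] ↥OK) ∨
        Nonempty (M ≃ₗ[↥OK] ↥(IsLocalRing.maximalIdeal ↥OK))) ∧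
      ¬ (Nonempty (M ≃ₗ[↥OK] K) ∧ Nonempty (M ≃ₗ[↥OK] ↥OK)) ∧
      ¬ (Nonempty (M ≃ₗ[↥OK] K) ∧
          Nonempty (M ≃ₗ[↥OK] ↥(IsLocalRing.maximalIdeal ↥OK))) ∧
      ¬ (Nonempty (M ≃ₗ[↥OK] ↥OK) ∧
          Nonempty (M ≃ₗ[↥OK] ↥(IsLocalRing.maximalIdeal ↥OK)))) ∧
    (¬ Nonempty (K ≃ₗ[↥OK] ↥OK) ∧
      ¬ Nonempty (K ≃ₗ[↥OK] ↥(IsLocalRing.maximalIdeal ↥OK)) ∧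
      ¬ Nonempty ((↥OK) ≃ₗ[↥OK] ↥(IsLocalRing.maximalIdeal ↥OK))) := by
  have hO := Valuation.integers_of_forall_le_one_iff hv
  have : Module.IsTorsionFree OK M := .of_smul_eq_zero htf
  obtain ⟨x, hx0, hx⟩ := hsurj (1 / 2) (by norm_num)
  obtain ⟨t, rfl⟩ := hO.exists_of_le_one (r := x) (by rw [hx]; norm_num)
  have ht0 : t ≠ 0 := by rintro rfl; exact hx0 (map_zero _)
  have ht : t ∈ maximalIdeal OK := hO.mem_maximalIdeal_iff.mpr (hx.trans_lt (by norm_num))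
  have hm : maximalIdeal OK ≠ ⊥ := (Submodule.ne_bot_iff _).mpr ⟨t, ht, ht0⟩
  have hKO : ¬Nonempty (K ≃ₗ[OK] OK) := fun ⟨e⟩ ↦
    (isEmpty_linearEquiv_ideal_of_ne_bot ht0 ht top_ne_bot).false
      (e.trans Submodule.topEquiv.symm)
  have hKm : ¬Nonempty (K ≃ₗ[OK] maximalIdeal OK) := fun ⟨e⟩ ↦
    (isEmpty_linearEquiv_ideal_of_ne_bot ht0 ht hm).false e
  have hOm : ¬Nonempty (OK ≃ₗ[OK] maximalIdeal OK) := fun ⟨e⟩ ↦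
    hO.not_isPrincipal_maximalIdeal hsurj (Ideal.isPrincipal_of_linearEquiv e)
  obtain ⟨N, hN, ⟨e⟩⟩ := exists_submodule_linearEquiv_of_rank_eq_one hrank
  refine ⟨⟨?_, ?_, ?_, ?_⟩, hKO, hKm, hOm⟩
  · rcases hO.nonempty_linearEquiv_of_ne_bot hsurj hN with ⟨⟨f⟩⟩ | ⟨⟨f⟩⟩ | ⟨⟨f⟩⟩
    exacts [Or.inl ⟨e.trans f⟩, Or.inr (Or.inl ⟨e.trans f⟩),
      Or.inr (Or.inr ⟨e.trans f⟩)]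
  · exact fun ⟨⟨f⟩, ⟨g⟩⟩ ↦ hKO ⟨f.symm.trans g⟩
  · exact fun ⟨⟨f⟩, ⟨g⟩⟩ ↦ hKm ⟨f.symm.trans g⟩
  · exact fun ⟨⟨f⟩, ⟨g⟩⟩ ↦ hOm ⟨f.symm.trans g⟩
end

section
/- Let K be a valuation field of height 1 and M a torsion-free O_K-module. Then the rank of M is countable (i.e., dim_K(K ⊗_{O_K} M) ≤ ℵ₀) if and only if M is countably generated, i.e., there is a countable subset of M generating it as an O_K-module. -/
/-!
As `v` takes real values, every set of valuations has a countable cofinal subset (cut it at the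
rationals), and `y` is an `O_K`-multiple of `x` as soon as `v y ≤ v x`; hence every
`O_K`-submodule of `K` is countably generated. Dévissage along the quotients by lines carries this
over to `O_K`-submodules of finite-dimensional, and then of countable-dimensional, `K`-vector
spaces. A torsion-free `M` embeds into `K ⊗ M`, which gives one direction; the other holds because
`1 ⊗ S` spans `K ⊗ M` over `K` whenever `S` spans `M`.
-/

open Cardinal Submodule TensorProduct

namespace Submodule

section Semiring

variable {R M : Type*} [Semiring R] [AddCommMonoid M] [Module R M]

theorem spanRank_le_aleph0_iff {p : Submodule R M} :
    p.spanRank ≤ ℵ₀ ↔ ∃ s : Set M, s.Countable ∧ span R s = p := by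
  constructor
  · intro h
    obtain ⟨s, hs, rfl⟩ := p.exists_span_set_card_eq_spanRank
    exact ⟨s, Set.countable_coe_iff.mp (mk_le_aleph0_iff.mp (hs ▸ h)), rfl⟩
  · rintro ⟨s, hs, rfl⟩
    exact (spanRank_span_le_card s).trans hs.le_aleph0

theorem spanRank_iSup_le_aleph0 {ι : Sort*} [Countable ι] {p : ι → Submodule R M}
    (hp : ∀ i, (p i).spanRank ≤ ℵ₀) : (⨆ i, p i).spanRank ≤ ℵ₀ := by
  choose s hs hsp using fun i ↦ spanRank_le_aleph0_iff.mp (hp i)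
  exact spanRank_le_aleph0_iff.mpr
    ⟨⋃ i, s i, Set.countable_iUnion hs, by simp only [span_iUnion, hsp]⟩

end Semiring

theorem spanRank_le_aleph0_of_inf_ker_of_map {R M N : Type*} [Ring R] [AddCommGroup M]
    [Module R M] [AddCommGroup N] [Module R N] {p : Submodule R M} (f : M →ₗ[R] N)
    (hker : (p ⊓ LinearMap.ker f).spanRank ≤ ℵ₀) (hmap : (p.map f).spanRank ≤ ℵ₀) :
    p.spanRank ≤ ℵ₀ := by
  obtain ⟨s, hs, hsp⟩ := spanRank_le_aleph0_iff.mp hker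
  obtain ⟨t, ht, htp⟩ := spanRank_le_aleph0_iff.mp hmap
  have hlift : ∀ y : t, ∃ x ∈ p, f x = y := fun y ↦ by
    rw [← mem_map, ← htp]
    exact subset_span y.2
  choose g hgp hgf using hlift
  have : Countable t := ht.to_subtype
  refine spanRank_le_aleph0_iff.mpr ⟨s ∪ Set.range g, hs.union (Set.countable_range g), ?_⟩
  refine le_antisymm (span_le.mpr (Set.union_subset ?_ ?_)) fun x hx ↦ ?_
  · exact subset_span.trans (hsp.le.trans inf_le_left)
  · exact Set.range_subset_iff.mpr hgp
  have hfx : f x ∈ (span R (Set.range g)).map f := by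
    refine (span_le.mpr fun y hy ↦ ?_ : span R t ≤ _) (htp ▸ mem_map_of_mem hx)
    exact ⟨g ⟨y, hy⟩, subset_span ⟨_, rfl⟩, hgf _⟩
  obtain ⟨y, hy, hfy⟩ := hfx
  have hxy : x - y ∈ span R s := by
    rw [hsp]
    refine ⟨sub_mem hx ((span_le.mpr (Set.range_subset_iff.mpr hgp)) hy), ?_⟩
    simp [hfy]
  simpa using add_mem (span_mono Set.subset_union_left hxy)
    (span_mono Set.subset_union_right hy)

end Submodule

theorem exists_countable_forall_exists_le {X : Type*} (f : X → ℝ) :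
    ∃ s : Set X, s.Countable ∧ ∀ x, ∃ y ∈ s, f x ≤ f y := by
  by_cases hmax : ∃ m, ∀ x, f x ≤ f m
  · obtain ⟨m, hm⟩ := hmax
    exact ⟨{m}, Set.countable_singleton m, fun x ↦ ⟨m, rfl, hm x⟩⟩
  push Not at hmax
  choose g hg using fun q : {q : ℚ // ∃ x, (q : ℝ) < f x} ↦ q.2
  refine ⟨Set.range g, Set.countable_range g, fun x ↦ ?_⟩
  obtain ⟨y, hxy⟩ := hmax x
  obtain ⟨q, hxq, hqy⟩ := exists_rat_btwn hxy
  exact ⟨g ⟨q, y, hqy⟩, ⟨_, rfl⟩, hxq.le.trans (hg ⟨q, y, hqy⟩).le⟩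

namespace ValuationSubring

variable {K : Type*} [Field K] {O : ValuationSubring K} {v : Valuation K NNReal}

theorem mem_span_singleton_of_valuation_le (hv : ∀ x : K, v x ≤ 1 ↔ x ∈ O) {x y : K}
    (h : v y ≤ v x) : y ∈ span O {x} := by
  rcases eq_or_ne x 0 with rfl | hx
  · simp [(map_eq_zero v).mp (le_antisymm (by simpa using h) zero_le)]
  have hyx : y / x ∈ O := (hv _).mp <| by
    rw [map_div₀, div_le_one₀ (pos_of_ne_zero ((v.ne_zero_iff).mpr hx))]
    exact h
  exact mem_span_singleton.mpr ⟨⟨y / x, hyx⟩, div_mul_cancel₀ y hx⟩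

theorem spanRank_le_aleph0 (hv : ∀ x : K, v x ≤ 1 ↔ x ∈ O) (N : Submodule O K) :
    N.spanRank ≤ ℵ₀ := by
  obtain ⟨s, hs, hsN⟩ := exists_countable_forall_exists_le fun x : N ↦ (v x : ℝ)
  refine spanRank_le_aleph0_iff.mpr ⟨(↑) '' s, hs.image _, le_antisymm ?_ fun y hy ↦ ?_⟩
  · exact span_le.mpr (Set.image_subset_iff.mpr fun x _ ↦ x.2)
  obtain ⟨x, hx, hyx⟩ := hsN ⟨y, hy⟩
  exact span_mono (Set.singleton_subset_iff.mpr (Set.mem_image_of_mem _ hx))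
    (mem_span_singleton_of_valuation_le hv (NNReal.coe_le_coe.mp hyx))

variable {V : Type*} [AddCommGroup V] [Module K V] [Module O V] [IsScalarTower O K V]

theorem spanRank_le_aleph0_of_le_span_singleton (hv : ∀ x : K, v x ≤ 1 ↔ x ∈ O) (a : V)
    {N : Submodule O V} (hN : N ≤ (span K {a}).restrictScalars O) : N.spanRank ≤ ℵ₀ := by
  set g := (LinearMap.toSpanSingleton K V a).restrictScalars O
  have hNg : N ≤ LinearMap.range g := by
    rwa [LinearMap.range_restrictScalars, LinearMap.range_toSpanSingleton]
  rw [← map_comap_eq_of_le hNg]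
  exact lift_le_aleph0.mp
    ((lift_spanRank_map_le g _).trans (lift_le_aleph0.mpr (spanRank_le_aleph0 hv _)))

theorem spanRank_le_aleph0_of_le_span_of_finite (hv : ∀ x : K, v x ≤ 1 ↔ x ∈ O) {s : Set V}
    (hs : s.Finite) {N : Submodule O V} (hN : N ≤ (span K s).restrictScalars O) :
    N.spanRank ≤ ℵ₀ := by
  induction s, hs using Set.Finite.induction_on generalizing N with
  | empty => simp_all [spanRank_eq_zero_iff_eq_bot.mpr]
  | @insert a s _ _ ih =>
    set W := span K s
    let f := W.mkQ.restrictScalars O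
    refine spanRank_le_aleph0_of_inf_ker_of_map f (ih ?_) ?_
    · rw [LinearMap.ker_restrictScalars, ker_mkQ]
      exact inf_le_right
    refine spanRank_le_aleph0_of_le_span_singleton hv (W.mkQ a) ?_
    rintro _ ⟨x, hx, rfl⟩
    obtain ⟨c, z, hz, rfl⟩ := mem_span_insert.mp (hN hx)
    exact mem_span_singleton.mpr ⟨c, by simp [f, (Quotient.mk_eq_zero W).mpr hz]⟩

theorem spanRank_le_aleph0_of_rank_le_aleph0 (hv : ∀ x : K, v x ≤ 1 ↔ x ∈ O)
    (hV : Module.rank K V ≤ ℵ₀) (N : Submodule O V) : N.spanRank ≤ ℵ₀ := by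
  let b := Module.Basis.ofVectorSpace K V
  have : Countable (Module.Basis.ofVectorSpaceIndex K V) :=
    mk_le_aleph0_iff.mp (b.mk_eq_rank'' ▸ hV)
  have hN : N = ⨆ t : Finset (Module.Basis.ofVectorSpaceIndex K V),
      N ⊓ (span K (b '' t)).restrictScalars O := by
    refine le_antisymm (fun x hx ↦ ?_) (iSup_le fun _ ↦ inf_le_left)
    exact mem_iSup_of_mem (b.repr x).support ⟨hx, b.mem_span_repr_support x⟩
  rw [hN]
  exact spanRank_iSup_le_aleph0 fun t ↦
    spanRank_le_aleph0_of_le_span_of_finite hv (t.finite_toSet.image b) inf_le_right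

end ValuationSubring

theorem TensorProduct.mk_one_injective_of_isFractionRing {R K M : Type*} [CommRing R]
    [IsDomain R] [Field K] [Algebra R K] [IsFractionRing R K] [AddCommGroup M] [Module R M]
    (htf : ∀ (r : R) (x : M), r • x = 0 → r = 0 ∨ x = 0) :
    Function.Injective (TensorProduct.mk R K M 1) := by
  have := (isLocalizedModule_iff_isBaseChange (nonZeroDivisors R) K _).mpr
    (TensorProduct.isBaseChange R M K)
  refine (IsLocalizedModule.injective_iff_isRegular (nonZeroDivisors R) _).mpr fun c x y hxy ↦ ?_
  have := htf c (x - y) (by rw [smul_sub, sub_eq_zero]; exact hxy)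
  exact sub_eq_zero.mp (this.resolve_left (nonZeroDivisors.coe_ne_zero c))

theorem statement4_general (K : Type*) [Field K] (OK : ValuationSubring K)
    (v : Valuation K NNReal) (hv : ∀ x : K, v x ≤ 1 ↔ x ∈ OK)
    (M : Type*) [AddCommGroup M] [Module ↥OK M]
    (htf : ∀ (r : ↥OK) (x : M), r • x = 0 → r = 0 ∨ x = 0) :
    Module.rank K (K ⊗[↥OK] M) ≤ Cardinal.aleph0 ↔
      ∃ S : Set M, S.Countable ∧ Submodule.span ↥OK S = ⊤ := by
  rw [← spanRank_le_aleph0_iff]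
  constructor
  · intro h
    let j := TensorProduct.mk OK K M 1
    have hj := lift_spanRank_map_eq_of_injective j (mk_one_injective_of_isFractionRing htf) ⊤
    refine lift_le_aleph0.mp (hj.symm.trans_le (lift_le_aleph0.mpr ?_))
    exact ValuationSubring.spanRank_le_aleph0_of_rank_le_aleph0 hv h _
  · intro h
    calc Module.rank K (K ⊗[↥OK] M)
        ≤ (⊤ : Submodule K (K ⊗[↥OK] M)).spanRank := rank_le_spanRank
      _ = ((⊤ : Submodule OK M).baseChange K).spanRank := by rw [baseChange_top]
      _ ≤ lift (⊤ : Submodule OK M).spanRank := spanRank_baseChange_le ⊤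
      _ ≤ ℵ₀ := lift_le_aleph0.mpr h

/-- Let `K` be a valuation field of height `1` and `M` a torsion-free
`O_K`-module.  Then the rank of `M` is countable (i.e. `dim_K (K ⊗ M) ≤ ℵ₀`) if and only if
`M` is countably generated. -/
theorem statement4 (K : Type*) [Field K] (OK : ValuationSubring K)
    (hnf : ¬ IsField ↥OK)
    (v : Valuation K NNReal) (hv : ∀ x : K, v x ≤ 1 ↔ x ∈ OK)
    (M : Type*) [AddCommGroup M] [Module ↥OK M]
    (htf : ∀ (r : ↥OK) (x : M), r • x = 0 → r = 0 ∨ x = 0) :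
    Module.rank K (K ⊗[↥OK] M) ≤ Cardinal.aleph0 ↔
      ∃ S : Set M, S.Countable ∧ Submodule.span ↥OK S = ⊤ :=
  statement4_general K OK v hv M htf
end

section
/- Let K be a valuation field of height 1, M an almost finitely generated torsion-free O_K-module, and S ⊆ M a subset generating M as an O_K-module. Then M has finite rank d, and for every π ∈ m̃_K there exist elements s_1, …, s_d ∈ S that are linearly independent over O_K and such that the O_K-submodule they generate contains π·M. -/
/-!
Embed `M` in `V = K ⊗ M`; the embedding is injective because `M` is torsion-free. If
`ε ≠ 0` and `ε • M` lies in a finitely generated submodule `N`, then `V` is spanned by the image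
of the generators of `N`, so it is finite dimensional, and in a fixed `K`-basis of `V` the
coordinates of elements of `M` have valuation at most `C / v ε`. Hence the valuations of the
determinants of `d`-tuples of elements of `M` are bounded. Choose `s ∈ Sᵈ` whose determinant is
maximal up to the factor `v π`. If the valuation is discrete, `M` is finitely generated, and an
exact maximum over a finite generating subset of `S` will do. Otherwise `v π < 1`, and any tuple
within the factor `v π` of the supremum works. By Cramer's rule, the coordinates of `π • y` in the
basis `s` are `π · det(s with sᵢ replaced by y) / det s`, and these are integral by maximality.
-/

open TensorProduct

/-- The ideal `m̃_K`: it is all of `O_K` when the valuation is discrete (equivalently, the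
maximal ideal is principal), and the maximal ideal otherwise. -/
noncomputable def tildeMax {K : Type*} [Field K] (O : ValuationSubring K) : Ideal ↥O :=
  open Classical in
  if (IsLocalRing.maximalIdeal ↥O).IsPrincipal then ⊤ else IsLocalRing.maximalIdeal ↥O

open Module Submodule

open scoped NNReal

theorem Module.Basis.exists_det_comp_ne_zero {K V n α : Type*} [Field K] [AddCommGroup V]
    [Module K V] [Fintype n] [DecidableEq n] (b : Basis n K V) (f : α → V)
    (hf : span K (Set.range f) = ⊤) : ∃ a : n → α, b.det (f ∘ a) ≠ 0 := by
  obtain ⟨κ, a, -, hspan, hli⟩ := exists_linearIndependent' K f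
  let B := Basis.mk hli (hspan.trans hf).ge
  let e := b.indexEquiv B
  have hB : f ∘ (a ∘ e) = B.reindex e.symm := by
    ext i
    simp [B]
  exact ⟨a ∘ e, hB ▸ (b.isUnit_det _).ne_zero⟩

theorem Matrix.valuation_det_le {R Γ₀ : Type*} [CommRing R]
    [LinearOrderedCommMonoidWithZero Γ₀] (v : Valuation R Γ₀) {n : Type*} [Fintype n]
    [DecidableEq n] (A : Matrix n n R) {C : Γ₀} (h : ∀ i j, v (A i j) ≤ C) :
    v A.det ≤ C ^ Fintype.card n := by
  rw [Matrix.det_apply]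
  refine v.map_sum_le fun σ _ => ?_
  calc v (Equiv.Perm.sign σ • ∏ i, A (σ i) i) = ∏ i, v (A (σ i) i) := by
        rcases Int.units_eq_one_or (Equiv.Perm.sign σ) with h | h <;> simp [h]
    _ ≤ ∏ _i : n, C := Finset.prod_le_prod' fun i _ => h _ _
    _ = C ^ Fintype.card n := by simp

theorem NNReal.exists_mul_le_of_bddAbove {α : Type*} {W : α → ℝ≥0} {T : Set α}
    (hbdd : BddAbove (W '' T)) {t₀ : α} (ht₀ : t₀ ∈ T) (hW : W t₀ ≠ 0) {c : ℝ≥0}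
    (hc : c < 1) : ∃ t ∈ T, W t ≠ 0 ∧ ∀ t' ∈ T, c * W t' ≤ W t := by
  have hpos : 0 < sSup (W '' T) :=
    (pos_iff_ne_zero.mpr hW).trans_le (le_csSup hbdd ⟨t₀, ht₀, rfl⟩)
  obtain ⟨-, ⟨t, ht, rfl⟩, hlt⟩ :=
    exists_lt_of_lt_csSup ((Set.nonempty_of_mem ht₀).image W) (mul_lt_of_lt_one_left hpos hc)
  exact ⟨t, ht, (pos_of_gt hlt).ne', fun t' ht' =>
    (mul_le_mul_right (le_csSup hbdd ⟨t', ht', rfl⟩) c).trans hlt.le⟩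

theorem exists_finset_subset_span_eq_top {R M : Type*} [Semiring R] [AddCommMonoid M]
    [Module R M] (hfg : (⊤ : Submodule R M).FG) {S : Set M} (hS : span R S = ⊤) :
    ∃ T : Finset M, ↑T ⊆ S ∧ span R (T : Set M) = ⊤ := by
  obtain ⟨G, hG⟩ := hfg
  obtain ⟨T, hTS, hGT⟩ := subset_span_finite_of_subset_span (R := R) (s := S) (t := G)
    fun g _ => by simp [hS]
  exact ⟨T, hTS, eq_top_iff.mpr (hG ▸ span_le.mpr hGT)⟩

section Lattice

variable {O K : Type*} [CommRing O] [Field K] [Algebra O K]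
  {M V : Type*} [AddCommGroup M] [Module O M] [AddCommGroup V] [Module O V] [Module K V]
  [IsScalarTower O K V]

theorem mem_span_of_repr_eq_algebraMap (ι : M →ₗ[O] V) (hι : Function.Injective ι)
    {n : Type*} [Fintype n] {s : n → M} (B : Basis n K V) (hB : ⇑B = ι ∘ s) {x : M} {c : n → O}
    (hc : ∀ i, B.repr (ι x) i = algebraMap O K (c i)) : x ∈ span O (Set.range s) := by
  have : x = ∑ i, c i • s i := hι <| by
    conv_lhs => rw [← B.sum_repr (ι x)]
    simp [hc, hB, algebraMap_smul]
  rw [this]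
  exact sum_mem fun i _ => smul_mem _ _ (subset_span ⟨i, rfl⟩)

variable [IsFractionRing O K]

theorem IsLocalizedModule.exists_det_ne_zero (ι : M →ₗ[O] V)
    [IsLocalizedModule (nonZeroDivisors O) ι] {n : Type*} [Fintype n] [DecidableEq n]
    (b : Basis n K V) {T : Set M} (hT : span O T = ⊤) :
    ∃ t : n → M, (∀ i, t i ∈ T) ∧ b.det (ι ∘ t) ≠ 0 := by
  have hspan : span K (Set.range (ι ∘ Subtype.val : T → V)) = ⊤ := by
    rw [Set.range_comp, Subtype.range_coe]
    exact span_eq_top_of_isLocalizedModule K (nonZeroDivisors O) ι hT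
  obtain ⟨a, ha⟩ := b.exists_det_comp_ne_zero _ hspan
  exact ⟨Subtype.val ∘ a, fun i => (a i).2, ha⟩

variable [IsDomain O]

theorem mem_span_image_of_smul_mem_span (ι : M →ₗ[O] V) {ε : O} (hε : ε ≠ 0) {G : Set M}
    {x : M} (hx : ε • x ∈ span O G) : ι x ∈ span K (ι '' G) := by
  have hεK : algebraMap O K ε ≠ 0 := by simpa using (IsFractionRing.injective O K).ne hε
  have hεx : ι (ε • x) ∈ span K (ι '' G) := by
    apply span_le_restrictScalars O K
    rw [← map_span]
    exact mem_map_of_mem hx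
  have : ι x = (algebraMap O K ε)⁻¹ • ι (ε • x) := by
    rw [map_smul, ← algebraMap_smul K ε (ι x), smul_smul, inv_mul_cancel₀ hεK, one_smul]
  exact this ▸ smul_mem _ _ hεx

theorem IsLocalizedModule.injective_of_isTorsionFree (ι : M →ₗ[O] V)
    [IsLocalizedModule (nonZeroDivisors O) ι] [Module.IsTorsionFree O M] :
    Function.Injective ι :=
  (IsLocalizedModule.injective_iff_isRegular (nonZeroDivisors O) ι).mpr fun c =>
    (IsRegular.of_ne_zero (nonZeroDivisors.ne_zero c.2)).isSMulRegular

theorem IsLocalizedModule.finite_of_smul_mem_fg (ι : M →ₗ[O] V)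
    [IsLocalizedModule (nonZeroDivisors O) ι] {ε : O} (hε : ε ≠ 0) {N : Submodule O M}
    (hN : N.FG) (h : ∀ x, ε • x ∈ N) : Module.Finite K V := by
  classical
  obtain ⟨G, rfl⟩ := hN
  refine ⟨⟨G.image ι, eq_top_iff.mpr ?_⟩⟩
  rw [← span_eq_top_of_isLocalizedModule K (nonZeroDivisors O) ι
    (span_univ (R := O) (M := M)), span_le, Finset.coe_image]
  rintro - ⟨x, -, rfl⟩
  exact mem_span_image_of_smul_mem_span ι hε (h x)

end Lattice

section Valuation

variable {K : Type*} [Field K] {O : ValuationSubring K} {v : Valuation K ℝ≥0}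

theorem valuation_lt_one_of_mem_maximalIdeal (hv : ∀ x, v x ≤ 1 ↔ x ∈ O) {π : O}
    (hπ : π ∈ IsLocalRing.maximalIdeal O) : v π < 1 := by
  have : v.IsEquiv O.valuation := Valuation.isEquiv_iff_val_le_one.mpr fun {x} =>
    (hv x).trans (O.valuation_le_one_iff x).symm
  exact this.lt_one_iff_lt_one.mpr ((O.valuation_lt_one_iff π).mp hπ)

theorem exists_mem_tildeMax_ne_zero (O : ValuationSubring K) : ∃ ε ∈ tildeMax O, ε ≠ 0 := by
  unfold tildeMax
  split_ifs with hprinc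
  · exact ⟨1, trivial, one_ne_zero⟩
  · have : IsLocalRing.maximalIdeal O ≠ ⊥ := fun h => hprinc (h ▸ bot_isPrincipal)
    exact Submodule.exists_mem_ne_zero_of_ne_bot this

variable {M V : Type*} [AddCommGroup M] [Module O M] [AddCommGroup V] [Module O V]
  [Module K V] [IsScalarTower O K V] {n : Type*} [Fintype n] [DecidableEq n]

theorem exists_valuation_le_of_smul_mem_fg (hv : ∀ x, v x ≤ 1 ↔ x ∈ O) (f : M →ₗ[O] K)
    {ε : O} (hε : ε ≠ 0) {N : Submodule O M} (hN : N.FG) (h : ∀ x, ε • x ∈ N) :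
    ∃ C, ∀ x, v (f x) ≤ C := by
  classical
  obtain ⟨G, rfl⟩ := hN
  have hbound : ∀ y ∈ span O (G : Set M), v (f y) ≤ G.sup (fun g => v (f g)) := by
    intro y hy
    induction hy using span_induction with
    | mem g hg => exact Finset.le_sup (f := fun g => v (f g)) hg
    | zero => simp
    | add y z _ _ hy hz => simpa using v.map_add_le hy hz
    | smul r y _ hy =>
      rw [map_smul, Algebra.smul_def, map_mul]
      exact mul_le_of_le_one_of_le ((hv _).mpr r.2) hy
  have hvε : 0 < v ε := by simpa [pos_iff_ne_zero] using hε
  refine ⟨G.sup (fun g => v (f g)) / v ε, fun x => (le_div_iff₀ hvε).mpr ?_⟩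
  simpa [Algebra.smul_def, mul_comm] using hbound _ (h x)

theorem exists_valuation_det_le_of_smul_mem_fg (hv : ∀ x, v x ≤ 1 ↔ x ∈ O)
    (ι : M →ₗ[O] V) (b : Basis n K V) {ε : O} (hε : ε ≠ 0) {N : Submodule O M} (hN : N.FG)
    (h : ∀ x, ε • x ∈ N) : ∃ C, ∀ t : n → M, v (b.det (ι ∘ t)) ≤ C := by
  choose C hC using fun j =>
    exists_valuation_le_of_smul_mem_fg hv ((b.coord j).restrictScalars O ∘ₗ ι) hε hN h
  refine ⟨Finset.univ.sup C ^ Fintype.card n, fun t => ?_⟩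
  rw [b.det_apply]
  exact Matrix.valuation_det_le v _ fun j i =>
    (hC j (t i)).trans (Finset.le_sup (Finset.mem_univ j))

theorem smul_mem_span_of_valuation_det_update_le (hv : ∀ x, v x ≤ 1 ↔ x ∈ O)
    (ι : M →ₗ[O] V) (hι : Function.Injective ι) (b : Basis n K V) {s : n → M}
    (hs : b.det (ι ∘ s) ≠ 0) {π : O} {y : M}
    (hy : ∀ i, v π * v (b.det (Function.update (ι ∘ s) i (ι y))) ≤ v (b.det (ι ∘ s))) :
    π • y ∈ span O (Set.range s) := by
  obtain ⟨hli, hsp⟩ := b.is_basis_iff_det.mpr (isUnit_iff_ne_zero.mpr hs)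
  let B := Basis.mk hli hsp.ge
  have hcramer : ∀ i,
      b.det (ι ∘ s) * B.repr (ι y) i = b.det (Function.update (ι ∘ s) i (ι y)) := fun i =>
    congr($(b.det_smul_mk_coord_eq_det_update hli hsp.ge i) (ι y))
  have hint : ∀ i, (π : K) * B.repr (ι y) i ∈ O := fun i => by
    have hD : 0 < v (b.det (ι ∘ s)) := by simpa [pos_iff_ne_zero] using hs
    rw [← hv]
    refine le_of_mul_le_mul_left ?_ hD
    rw [mul_one, ← map_mul, mul_left_comm, hcramer, map_mul]
    exact hy i
  refine mem_span_of_repr_eq_algebraMap ι hι B (Basis.coe_mk ..)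
    (c := fun i => ⟨_, hint i⟩) fun i => ?_
  simp [← algebraMap_smul K π (ι y)]

theorem linearIndependent_and_smul_mem_span_of_almost_max_det
    (hv : ∀ x, v x ≤ 1 ↔ x ∈ O) (ι : M →ₗ[O] V) (hι : Function.Injective ι)
    (b : Basis n K V) {T : Set M} (hT : span O T = ⊤) {s : n → M} (hsT : ∀ i, s i ∈ T)
    (hs : b.det (ι ∘ s) ≠ 0) {π : O}
    (hmax : ∀ t : n → M, (∀ i, t i ∈ T) → v π * v (b.det (ι ∘ t)) ≤ v (b.det (ι ∘ s))) :
    LinearIndependent O s ∧ ∀ x, π • x ∈ span O (Set.range s) := by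
  have hli := (b.is_basis_iff_det.mpr (isUnit_iff_ne_zero.mpr hs)).1
  refine ⟨(hli.restrict_scalars' O).of_comp, fun x => ?_⟩
  have hTπ : T ≤ (span O (Set.range s)).comap (DistribSMul.toLinearMap O M π) :=
    fun y hy => smul_mem_span_of_valuation_det_update_le hv ι hι b hs fun i => by
      rw [← Function.comp_update]
      exact hmax _
        ((Function.forall_update_iff s fun _ z => z ∈ T).mpr ⟨hy, fun j _ => hsT j⟩)
  exact span_le.mpr hTπ (hT ▸ mem_top)

variable (v) in
theorem exists_max_det_of_fg (ι : M →ₗ[O] V) [IsLocalizedModule (nonZeroDivisors O) ι]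
    (b : Basis n K V) (hfg : (⊤ : Submodule O M).FG) {S : Set M} (hS : span O S = ⊤) :
    ∃ T ⊆ S, span O T = ⊤ ∧ ∃ s : n → M, (∀ i, s i ∈ T) ∧ b.det (ι ∘ s) ≠ 0 ∧
      ∀ t : n → M, (∀ i, t i ∈ T) → v (b.det (ι ∘ t)) ≤ v (b.det (ι ∘ s)) := by
  obtain ⟨T, hTS, hT⟩ := exists_finset_subset_span_eq_top hfg hS
  obtain ⟨t₀, ht₀T, ht₀⟩ := IsLocalizedModule.exists_det_ne_zero ι b hT
  obtain ⟨s, hsT, hmax⟩ := Set.exists_max_image {t : n → M | ∀ i, t i ∈ T}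
    (fun t => v (b.det (ι ∘ t))) (Set.Finite.pi' fun _ => T.finite_toSet) ⟨t₀, ht₀T⟩
  refine ⟨T, hTS, hT, s, hsT, fun hs => ht₀ ?_, hmax⟩
  simpa [hs] using hmax t₀ ht₀T

theorem exists_almost_max_det (hv : ∀ x, v x ≤ 1 ↔ x ∈ O) (ι : M →ₗ[O] V)
    [IsLocalizedModule (nonZeroDivisors O) ι] (b : Basis n K V) {ε : O} (hε : ε ≠ 0)
    {N : Submodule O M} (hN : N.FG) (h : ∀ x, ε • x ∈ N) {S : Set M} (hS : span O S = ⊤)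
    {π : O} (hπ : v π < 1) :
    ∃ s : n → M, (∀ i, s i ∈ S) ∧ b.det (ι ∘ s) ≠ 0 ∧
      ∀ t : n → M, (∀ i, t i ∈ S) → v π * v (b.det (ι ∘ t)) ≤ v (b.det (ι ∘ s)) := by
  obtain ⟨C, hC⟩ := exists_valuation_det_le_of_smul_mem_fg hv ι b hε hN h
  obtain ⟨t₀, ht₀S, ht₀⟩ := IsLocalizedModule.exists_det_ne_zero ι b hS
  obtain ⟨s, hsS, hs, hmax⟩ := NNReal.exists_mul_le_of_bddAbove
    (W := fun t => v (b.det (ι ∘ t))) (T := {t | ∀ i, t i ∈ S})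
    ⟨C, by rintro - ⟨t, -, rfl⟩; exact hC t⟩ ht₀S (by simpa using ht₀) hπ
  exact ⟨s, hsS, by simpa using hs, hmax⟩

theorem exists_almost_max_det_of_mem_tildeMax (hv : ∀ x, v x ≤ 1 ↔ x ∈ O)
    (ι : M →ₗ[O] V) [IsLocalizedModule (nonZeroDivisors O) ι] (b : Basis n K V)
    (hafg : ∀ ε ∈ tildeMax O, ∃ N : Submodule O M, N.FG ∧ ∀ x, ε • x ∈ N)
    {S : Set M} (hS : span O S = ⊤) {π : O} (hπ : π ∈ tildeMax O) :
    ∃ T ⊆ S, span O T = ⊤ ∧ ∃ s : n → M, (∀ i, s i ∈ T) ∧ b.det (ι ∘ s) ≠ 0 ∧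
      ∀ t : n → M, (∀ i, t i ∈ T) → v π * v (b.det (ι ∘ t)) ≤ v (b.det (ι ∘ s)) := by
  by_cases hprinc : (IsLocalRing.maximalIdeal O).IsPrincipal
  · obtain ⟨N, hN, h1N⟩ := hafg 1 (by simp [tildeMax, hprinc])
    have : N = ⊤ := eq_top_iff.mpr fun x _ => by simpa using h1N x
    obtain ⟨T, hTS, hT, s, hsT, hs, hmax⟩ := exists_max_det_of_fg v ι b (this ▸ hN) hS
    exact ⟨T, hTS, hT, s, hsT, hs, fun t ht =>
      (mul_le_of_le_one_left' ((hv _).mpr π.2)).trans (hmax t ht)⟩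
  · have hπm : π ∈ IsLocalRing.maximalIdeal O := by simpa [tildeMax, hprinc] using hπ
    obtain ⟨ε, hε, hε0⟩ := exists_mem_tildeMax_ne_zero O
    obtain ⟨N, hN, hεN⟩ := hafg ε hε
    exact ⟨S, subset_rfl, hS, exists_almost_max_det hv ι b hε0 hN hεN hS
      (valuation_lt_one_of_mem_maximalIdeal hv hπm)⟩

end Valuation

theorem statement7_general (K : Type*) [Field K] (OK : ValuationSubring K)
    (v : Valuation K NNReal) (hv : ∀ x : K, v x ≤ 1 ↔ x ∈ OK)
    (M : Type*) [AddCommGroup M] [Module ↥OK M]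
    (htf : ∀ (r : ↥OK) (x : M), r • x = 0 → r = 0 ∨ x = 0)
    (hafg : ∀ ε : ↥OK, ε ∈ tildeMax OK →
      ∃ N : Submodule ↥OK M, N.FG ∧ ∀ x : M, ε • x ∈ N)
    (S : Set M) (hS : Submodule.span ↥OK S = ⊤) :
    ∃ d : ℕ, Module.rank K (K ⊗[↥OK] M) = d ∧
      ∀ π : ↥OK, π ∈ tildeMax OK →
        ∃ s : Fin d → M, (∀ i, s i ∈ S) ∧ LinearIndependent ↥OK s ∧
          ∀ x : M, π • x ∈ Submodule.span ↥OK (Set.range s) := by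
  let ι := TensorProduct.mk OK K M 1
  have : Module.IsTorsionFree OK M := Module.isTorsionFree_iff_smul_eq_zero.mpr htf
  have hι : Function.Injective ι := IsLocalizedModule.injective_of_isTorsionFree ι
  obtain ⟨ε, hε, hε0⟩ := exists_mem_tildeMax_ne_zero OK
  obtain ⟨N, hN, hεN⟩ := hafg ε hε
  have : Module.Finite K (K ⊗[OK] M) := IsLocalizedModule.finite_of_smul_mem_fg ι hε0 hN hεN
  let b := Module.finBasis K (K ⊗[OK] M)
  refine ⟨finrank K (K ⊗[OK] M), (finrank_eq_rank K _).symm, fun π hπ => ?_⟩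
  obtain ⟨T, hTS, hT, s, hsT, hs, hmax⟩ :=
    exists_almost_max_det_of_mem_tildeMax hv ι b hafg hS hπ
  obtain ⟨hli, hspan⟩ :=
    linearIndependent_and_smul_mem_span_of_almost_max_det hv ι hι b hT hsT hs hmax
  exact ⟨s, fun i => hTS (hsT i), hli, hspan⟩

/-- Let `K` be a valuation field of height `1`, `M` an almost finitely
generated torsion-free `O_K`-module and `S ⊆ M` a generating subset.  Then `M` has finite rank
`d` and for every `π ∈ m̃_K` there are `d` elements of `S` forming a `π`-basis of `M`:
they are linearly independent over `O_K` and the submodule they generate contains `π·M`. -/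
theorem statement7 (K : Type*) [Field K] (OK : ValuationSubring K)
    (hnf : ¬ IsField ↥OK)
    (v : Valuation K NNReal) (hv : ∀ x : K, v x ≤ 1 ↔ x ∈ OK)
    (M : Type*) [AddCommGroup M] [Module ↥OK M]
    (htf : ∀ (r : ↥OK) (x : M), r • x = 0 → r = 0 ∨ x = 0)
    (hafg : ∀ ε : ↥OK, ε ∈ tildeMax OK →
      ∃ N : Submodule ↥OK M, N.FG ∧ ∀ x : M, ε • x ∈ N)
    (S : Set M) (hS : Submodule.span ↥OK S = ⊤) :
    ∃ d : ℕ, Module.rank K (K ⊗[↥OK] M) = d ∧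
      ∀ π : ↥OK, π ∈ tildeMax OK →
        ∃ s : Fin d → M, (∀ i, s i ∈ S) ∧ LinearIndependent ↥OK s ∧
          ∀ x : M, π • x ∈ Submodule.span ↥OK (Set.range s) :=
  statement7_general K OK v hv M htf hafg S hS
end

section
/- Let K → L be an extension of valuation fields of height 1 and M a torsion-free O_K-module. For a torsion-free module N over a height-1 valuation ring O with maximal ideal m, set N^div = ⋂_{0 ≠ π ∈ m} π·N and N^sep = N/N^div. Assume M^sep is bounded, i.e., there is an injective O_K-linear map M^sep → O_K^{⊕I} for some index set I. Then the canonical O_L-linear maps M^div ⊗_{O_K} O_L → (M ⊗_{O_K} O_L)^div and M^sep ⊗_{O_K} O_L → (M ⊗_{O_K} O_L)^sep are bijective. -/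
/-!
`O_L` is torsion-free, hence flat, over the valuation ring `O_K`, so `O_L ⊗ -` keeps `M^div → M`
injective and `M^div → M → M^sep` exact. The module `M^div` is divisible by every nonzero element
of `O_K`, and since the value group of `O_L` is archimedean, every nonzero element of `O_L`
divides the image of a power of a fixed nonzero `ϖ ∈ m_K`; hence the image of `O_L ⊗ M^div` is
divisible. Conversely, `O_L ⊗ M^sep` embeds into a free `O_L`-module, which has no nonzero
divisible elements because `O_L` is not a field, so `(O_L ⊗ M)^div` maps to zero in `O_L ⊗ M^sep`.
-/

open TensorProduct

universe u

/-- The divisible submodule `N^div = ⋂_{0 ≠ π ∈ m} π·N` of a module `N` over a local ring. -/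
def divisibleSubmodule (O : Type*) [CommRing O] [IsLocalRing O]
    (N : Type*) [AddCommGroup N] [Module O N] : Submodule O N where
  carrier := {x | ∀ π : O, π ∈ IsLocalRing.maximalIdeal O → π ≠ 0 → ∃ y : N, x = π • y}
  zero_mem' := fun π _ _ => ⟨0, by simp⟩
  add_mem' := by
    intro a b ha hb π hπ h0
    obtain ⟨y, hy⟩ := ha π hπ h0
    obtain ⟨z, hz⟩ := hb π hπ h0
    exact ⟨y + z, by rw [hy, hz, smul_add]⟩
  smul_mem' := by
    intro c x hx π hπ h0
    obtain ⟨y, hy⟩ := hx π hπ h0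
    exact ⟨c • y, by rw [hy, smul_comm]⟩

open Function IsLocalRing

section Divisible

variable {O : Type*} [CommRing O] [IsLocalRing O]
variable {N P : Type*} [AddCommGroup N] [Module O N] [AddCommGroup P] [Module O P]

lemma map_mem_divisibleSubmodule (f : N →ₗ[O] P) {x : N} (hx : x ∈ divisibleSubmodule O N) :
    f x ∈ divisibleSubmodule O P := fun π hπ hπ0 => by
  obtain ⟨y, rfl⟩ := hx π hπ hπ0
  exact ⟨f y, map_smul f π y⟩

lemma divisibleSubmodule_eq_bot_of_injective {f : N →ₗ[O] P} (hf : Injective f)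
    (hP : divisibleSubmodule O P = ⊥) : divisibleSubmodule O N = ⊥ := by
  refine eq_bot_iff.2 fun x hx => ?_
  have hfx := map_mem_divisibleSubmodule f hx
  rw [hP, Submodule.mem_bot, ← map_zero f] at hfx
  exact hf hfx

variable [IsDomain O]

lemma divisibleSubmodule_self_eq_bot (hO : ¬ IsField O) : divisibleSubmodule O O = ⊥ := by
  obtain ⟨π, hπ0, hπ⟩ := Ring.exists_not_isUnit_of_not_isField hO
  refine eq_bot_iff.2 fun c hc => ?_
  by_contra hc0
  -- `c` is not divisible by `c * π`, since otherwise `π` would be a unit.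
  obtain ⟨d, hd⟩ := hc (c * π) (Ideal.mul_mem_left _ c hπ) (mul_ne_zero hc0 hπ0)
  rw [smul_eq_mul, mul_assoc] at hd
  exact hπ (IsUnit.of_mul_eq_one d (mul_left_cancel₀ hc0 (by rw [← hd, mul_one])))

lemma divisibleSubmodule_finsupp_eq_bot (hO : ¬ IsField O) (ι : Type*) :
    divisibleSubmodule O (ι →₀ O) = ⊥ := by
  refine eq_bot_iff.2 fun x hx => Finsupp.ext fun i => ?_
  have hxi := map_mem_divisibleSubmodule (Finsupp.lapply i) hx
  rwa [divisibleSubmodule_self_eq_bot hO, Submodule.mem_bot] at hxi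

lemma exists_mem_divisibleSubmodule_smul_eq [Module.IsTorsionFree O N] {a : O} (ha : a ≠ 0)
    {x : N} (hx : x ∈ divisibleSubmodule O N) :
    ∃ y ∈ divisibleSubmodule O N, x = a • y := by
  by_cases hu : IsUnit a
  · obtain ⟨u, rfl⟩ := hu
    exact ⟨(↑u⁻¹ : O) • x, Submodule.smul_mem _ _ hx, by rw [smul_smul, Units.mul_inv, one_smul]⟩
  obtain ⟨y, rfl⟩ := hx a hu ha
  refine ⟨y, fun π hπ hπ0 => ?_, rfl⟩
  -- Divide `a • y` by `a * π` and cancel `a`.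
  obtain ⟨z, hz⟩ := hx (a * π) (Ideal.mul_mem_right π _ hu) (mul_ne_zero ha hπ0)
  exact ⟨z, smul_right_injective N ha (by simp only [hz, mul_smul])⟩

end Divisible

section BaseChange

variable {O : Type*} [CommRing O]
variable {A : Type*} [CommRing A] [IsLocalRing A] [Algebra O A]
variable {M : Type*} [AddCommGroup M] [Module O M]

lemma divisibleSubmodule_tensor_eq_bot [IsDomain A] [Module.Flat O A] (hA : ¬ IsField A)
    {N ι : Type*} [AddCommGroup N] [Module O N] {f : N →ₗ[O] (ι →₀ O)} (hf : Injective f) :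
    divisibleSubmodule A (A ⊗[O] N) = ⊥ := by
  classical
  refine divisibleSubmodule_eq_bot_of_injective (f := (finsuppScalarRight O A A ι).toLinearMap ∘ₗ
    f.baseChange A) ?_ (divisibleSubmodule_finsupp_eq_bot hA ι)
  exact (finsuppScalarRight O A A ι).injective.comp
    (Module.Flat.lTensor_preserves_injective_linearMap f hf)

variable [IsLocalRing O]

lemma lTensor_subtype_mem_divisibleSubmodule [IsDomain O] [Module.IsTorsionFree O M]
    (hA : ∀ π : A, π ≠ 0 → ∃ a : O, a ≠ 0 ∧ π ∣ algebraMap O A a)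
    (t : A ⊗[O] divisibleSubmodule O M) :
    (divisibleSubmodule O M).subtype.lTensor A t ∈ divisibleSubmodule A (A ⊗[O] M) := by
  intro π _ hπ0
  obtain ⟨a, ha, u, hu⟩ := hA π hπ0
  have hsurj : Surjective (a • LinearMap.id : divisibleSubmodule O M →ₗ[O] _) := fun x => by
    obtain ⟨y, hy, hxy⟩ := exists_mem_divisibleSubmodule_smul_eq ha x.2
    exact ⟨⟨y, hy⟩, Subtype.ext hxy.symm⟩
  obtain ⟨s, rfl⟩ := LinearMap.lTensor_surjective A hsurj t
  refine ⟨u • (divisibleSubmodule O M).subtype.lTensor A s, ?_⟩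
  rw [LinearMap.lTensor_smul, LinearMap.lTensor_id, LinearMap.smul_apply, LinearMap.id_apply,
    map_smul, ← algebraMap_smul A a, hu, mul_smul]

theorem divisibleSubmodule_baseChange [IsDomain O] [IsDomain A] [Module.Flat O A]
    [Module.IsTorsionFree O M] (hA : ¬ IsField A)
    (hdvd : ∀ π : A, π ≠ 0 → ∃ a : O, a ≠ 0 ∧ π ∣ algebraMap O A a)
    {ι : Type*} {f : (M ⧸ divisibleSubmodule O M) →ₗ[O] (ι →₀ O)} (hf : Injective f) :
    Injective ((divisibleSubmodule O M).subtype.lTensor A) ∧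
    Set.range ((divisibleSubmodule O M).subtype.lTensor A) =
      (divisibleSubmodule A (A ⊗[O] M) : Set (A ⊗[O] M)) ∧
    (LinearMap.ker ((divisibleSubmodule O M).mkQ.lTensor A) : Set (A ⊗[O] M)) =
      divisibleSubmodule A (A ⊗[O] M) := by
  have hexact := lTensor_exact A (LinearMap.exact_subtype_mkQ (divisibleSubmodule O M))
    (divisibleSubmodule O M).mkQ_surjective
  have hker : (LinearMap.ker ((divisibleSubmodule O M).mkQ.lTensor A) : Set (A ⊗[O] M)) =
      divisibleSubmodule A (A ⊗[O] M) := by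
    refine Set.Subset.antisymm (fun x hx => ?_) (fun x hx => ?_)
    · obtain ⟨t, rfl⟩ := (hexact x).1 hx
      exact lTensor_subtype_mem_divisibleSubmodule hdvd t
    · have hmap := map_mem_divisibleSubmodule ((divisibleSubmodule O M).mkQ.baseChange A) hx
      rwa [divisibleSubmodule_tensor_eq_bot hA hf] at hmap
  refine ⟨Module.Flat.lTensor_preserves_injective_linearMap _ (Submodule.injective_subtype _),
    ?_, hker⟩
  rw [← hker]
  ext x
  exact (hexact x).symm

end BaseChange

section Valuation

variable {L : Type*} [Field L] {O : ValuationSubring L} {v : Valuation L NNReal}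

lemma valuation_lt_one_of_mem_maximalIdeal_s8 (hv : ∀ x, v x ≤ 1 ↔ x ∈ O) {a : O}
    (ha : a ∈ maximalIdeal O) : v a < 1 :=
  (Valuation.isEquiv_of_val_le_one fun x => (hv x).trans (O.valuation_le_one_iff x).symm
    ).lt_one_iff_lt_one.2 ((O.valuation_lt_one_iff a).1 ha)

-- The archimedean property of the value group `ℝ≥0`: this is where height one enters.
lemma exists_dvd_pow_of_valuation_lt_one (hv : ∀ x, v x ≤ 1 ↔ x ∈ O) {x π : O}
    (hx : v x < 1) (hπ : π ≠ 0) : ∃ n : ℕ, π ∣ x ^ n := by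
  have hπL : (π : L) ≠ 0 := fun h => hπ (Subtype.ext h)
  obtain ⟨n, hn⟩ := NNReal.exists_pow_lt_of_lt_one
    (pos_iff_ne_zero.2 ((Valuation.ne_zero_iff v).2 hπL)) hx
  have hq : v ((x : L) ^ n / π) ≤ 1 := by
    rw [map_div₀, map_pow]
    exact div_le_one_of_le₀ hn.le zero_le
  exact ⟨n, ⟨_, (hv _).1 hq⟩, Subtype.ext (by push_cast; rw [mul_div_cancel₀ _ hπL])⟩

end Valuation

/-- Bijectivity of `M^div ⊗ O_L → (M ⊗ O_L)^div` is expressed as injectivity of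
`O_L ⊗ M^div → O_L ⊗ M` together with the identification of its range, and bijectivity of
`M^sep ⊗ O_L → (M ⊗ O_L)^sep` as the kernel of `O_L ⊗ M → O_L ⊗ M^sep` being `(O_L ⊗ M)^div`. -/
theorem statement8_general (K : Type u) [Field K] (OK : ValuationSubring K)
    (hKnf : ¬ IsField ↥OK)
    (L : Type*) [Field L] [Algebra K L] (OL : ValuationSubring L)
    (hLnf : ¬ IsField ↥OL)
    (vL : Valuation L NNReal) (hvL : ∀ x : L, vL x ≤ 1 ↔ x ∈ OL)
    (hext : ∀ x : K, algebraMap K L x ∈ OL ↔ x ∈ OK)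
    [Algebra ↥OK ↥OL]
    (hcomp : ∀ x : ↥OK, ((algebraMap ↥OK ↥OL x : ↥OL) : L) = algebraMap K L (x : K))
    (M : Type u) [AddCommGroup M] [Module ↥OK M]
    (htf : ∀ (r : ↥OK) (x : M), r • x = 0 → r = 0 ∨ x = 0)
    (hbounded : ∃ (ι : Type u)
        (f : (M ⧸ divisibleSubmodule ↥OK M) →ₗ[↥OK] (ι →₀ ↥OK)),
      Function.Injective f) :
    Function.Injective
      (LinearMap.lTensor (R := ↥OK) ↥OL (divisibleSubmodule ↥OK M).subtype) ∧
    (Set.range (LinearMap.lTensor (R := ↥OK) ↥OL (divisibleSubmodule ↥OK M).subtype) =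
      (divisibleSubmodule ↥OL (↥OL ⊗[↥OK] M) : Set (↥OL ⊗[↥OK] M))) ∧
    ((LinearMap.ker (LinearMap.lTensor (R := ↥OK) ↥OL (divisibleSubmodule ↥OK M).mkQ) :
        Set (↥OL ⊗[↥OK] M)) =
      (divisibleSubmodule ↥OL (↥OL ⊗[↥OK] M) : Set (↥OL ⊗[↥OK] M))) := by
  have hinj : Injective (algebraMap OK OL) := fun x y hxy => Subtype.ext <|
    (algebraMap K L).injective (by rw [← hcomp, ← hcomp, hxy])
  have : Module.Flat OK OL := Module.Flat.flat_iff_torsion_eq_bot_of_isBezout.2 <|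
    Submodule.isTorsionFree_iff_torsion_eq_bot.1
      (Module.isTorsionFree_iff_algebraMap_injective.2 hinj)
  have : Module.IsTorsionFree OK M := .of_smul_eq_zero htf
  obtain ⟨ϖ, hϖ0, hϖ⟩ := Ring.exists_not_isUnit_of_not_isField hKnf
  have hϖL : vL (algebraMap OK OL ϖ) < 1 := by
    rw [hcomp]
    exact valuation_lt_one_of_mem_maximalIdeal_s8 (v := vL.comap (algebraMap K L))
      (fun x => (hvL _).trans (hext x)) hϖ
  have hdvd : ∀ π : OL, π ≠ 0 → ∃ a : OK, a ≠ 0 ∧ π ∣ algebraMap OK OL a := fun π hπ => by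
    obtain ⟨n, hn⟩ := exists_dvd_pow_of_valuation_lt_one hvL hϖL hπ
    exact ⟨ϖ ^ n, pow_ne_zero n hϖ0, by rwa [map_pow]⟩
  obtain ⟨ι, f, hf⟩ := hbounded
  exact divisibleSubmodule_baseChange hLnf hdvd hf

/-- Let `K → L` be an extension of valuation fields of height `1` and `M` a
torsion-free `O_K`-module whose separated quotient `M^sep = M/M^div` is bounded.  Then the
canonical `O_L`-linear maps `M^div ⊗_{O_K} O_L → (M ⊗_{O_K} O_L)^div` and
`M^sep ⊗_{O_K} O_L → (M ⊗_{O_K} O_L)^sep` are bijective.  (The first map is the restriction of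
`O_L ⊗ M^div → O_L ⊗ M`, so its bijectivity onto the divisible submodule is expressed by
injectivity together with the identification of its range with the divisible submodule; the
bijectivity of the second map is equivalent to the kernel of `O_L ⊗ M → O_L ⊗ M^sep` being the
divisible submodule of `O_L ⊗ M`.) -/
theorem statement8 (K : Type u) [Field K] (OK : ValuationSubring K)
    (hKnf : ¬ IsField ↥OK)
    (vK : Valuation K NNReal) (hvK : ∀ x : K, vK x ≤ 1 ↔ x ∈ OK)
    (L : Type*) [Field L] [Algebra K L] (OL : ValuationSubring L)
    (hLnf : ¬ IsField ↥OL)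
    (vL : Valuation L NNReal) (hvL : ∀ x : L, vL x ≤ 1 ↔ x ∈ OL)
    (hext : ∀ x : K, algebraMap K L x ∈ OL ↔ x ∈ OK)
    [Algebra ↥OK ↥OL]
    (hcomp : ∀ x : ↥OK, ((algebraMap ↥OK ↥OL x : ↥OL) : L) = algebraMap K L (x : K))
    (M : Type u) [AddCommGroup M] [Module ↥OK M]
    (htf : ∀ (r : ↥OK) (x : M), r • x = 0 → r = 0 ∨ x = 0)
    (hbounded : ∃ (ι : Type u)
        (f : (M ⧸ divisibleSubmodule ↥OK M) →ₗ[↥OK] (ι →₀ ↥OK)),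
      Function.Injective f) :
    Function.Injective
      (LinearMap.lTensor (R := ↥OK) ↥OL (divisibleSubmodule ↥OK M).subtype) ∧
    (Set.range (LinearMap.lTensor (R := ↥OK) ↥OL (divisibleSubmodule ↥OK M).subtype) =
      (divisibleSubmodule ↥OL (↥OL ⊗[↥OK] M) : Set (↥OL ⊗[↥OK] M))) ∧
    ((LinearMap.ker (LinearMap.lTensor (R := ↥OK) ↥OL (divisibleSubmodule ↥OK M).mkQ) :
        Set (↥OL ⊗[↥OK] M)) =
      (divisibleSubmodule ↥OL (↥OL ⊗[↥OK] M) : Set (↥OL ⊗[↥OK] M))) :=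
  statement8_general K OK hKnf L OL hLnf vL hvL hext hcomp M htf hbounded
end

section
/- Let K → K' be a finite separable extension of Henselian valuation fields of height 1, with O_{K'} the integral closure of O_K in K'. Then: (i) for every x ∈ K' and every ε ∈ m_K, the element ε·Tr_{K'/K}(x) of K' lies in the O_{K'}-submodule of K' generated by the products δ·d·x with δ ∈ m_{K'} and d ∈ 𝔇_{K'/K}; (ii) for every a ∈ m_K and every b ∈ K' with b·m_{K'} ⊆ O_{K'}, the element [K':K]·a·b lies in 𝔇_{K'/K}, where [K':K] is the degree of K'/K. -/
/-- The different ideal `𝔇_{L/K}` of a finite separable extension of valuation fields, viewed as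
the set of its elements in `L`. -/
def differentSet (K L : Type*) [Field K] [Field L] [Algebra K L]
    (OK : ValuationSubring K) (OL : ValuationSubring L) : Set L :=
  {d | d ∈ OL ∧ ∀ x : L,
    (∀ y : L, y ∈ OL → Algebra.trace K L (x * y) ∈ OK) → d * x ∈ OL}

/-!
Let `C` be the codifferent, an `O_{K'}`-submodule of `K'` containing `O_{K'}`; it is bounded,
since it is not all of `K'` (the trace does not vanish) and `O_{K'}` is a valuation ring. Given
`x ≠ 0` and `0 ≠ ε ∈ m_K`, the multiples `a·x/εᵏ` eventually leave `C` since `K` has height one,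
so there is a `w ∈ K^×·x` with `w ∈ C` but `w/ε ∉ C`. As `O_{K'}` is a valuation ring,
`ε·y/w ∈ m_{K'}` for every `y ∈ C`, whence `(ε·Tr(x)/x)·C = Tr(w)·(ε/w)·C ⊆ m_{K'}`.

If `ε = c·d` with `c, d ∈ m_K`, this applied to `d` puts `d·Tr(x)/x` in the different and
`ε·Tr(x) = c·(d·Tr(x)/x)·x`. Otherwise `m_K = ε·O_K`, so `O_K` is a discrete valuation ring,
`O_{K'}` is noetherian with `m_{K'} = π·O_{K'}`, and `ε·Tr(x)/x = π·t` with `t` in the different.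
Part (ii) is part (i) at `x = 1`, multiplied by elements of `C`.
-/

open IsLocalRing

theorem ValuationRing.exists_mul_eq_or_maximalIdeal_eq_span {R : Type*} [CommRing R] [IsDomain R]
    [ValuationRing R] {ε : R} (hε : ε ∈ maximalIdeal R) :
    (∃ c ∈ maximalIdeal R, ∃ d ∈ maximalIdeal R, ε = c * d) ∨
      maximalIdeal R = Ideal.span {ε} := by
  refine or_iff_not_imp_left.2 fun hsplit =>
    le_antisymm (fun c hc => ?_) ((Ideal.span_singleton_le_iff_mem _).2 hε)
  rw [Ideal.mem_span_singleton]
  rcases ValuationRing.dvd_total ε c with h | ⟨d, rfl⟩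
  · exact h
  · by_cases hd : IsUnit d
    · exact hd.mul_right_dvd.2 dvd_rfl
    · exact absurd ⟨c, hc, d, hd, rfl⟩ hsplit

theorem IsDiscreteValuationRing.of_maximalIdeal_eq_span {R : Type*} [CommRing R] [IsDomain R]
    [IsLocalRing R] {ϖ : R} (hϖ : ϖ ≠ 0) (h : IsLocalRing.maximalIdeal R = Ideal.span {ϖ})
    (hfin : ∀ x : R, x ≠ 0 → ∃ n, ¬ ϖ ^ n ∣ x) : IsDiscreteValuationRing R := by
  refine ofHasUnitMulPowIrreducibleFactorization
    ⟨ϖ, irreducible_of_span_eq_maximalIdeal ϖ hϖ h, fun {x} hx => ?_⟩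
  obtain ⟨n, hn⟩ := hfin x hx
  have hmult : FiniteMultiplicity ϖ x :=
    ⟨n, fun hdvd => hn ((pow_dvd_pow ϖ n.le_succ).trans hdvd)⟩
  obtain ⟨u, hxu, hu⟩ := hmult.exists_eq_pow_mul_and_not_dvd
  have hunit : IsUnit u := by
    by_contra hnu
    exact hu (Ideal.mem_span_singleton.1 (h ▸ (mem_maximalIdeal u).2 hnu))
  exact ⟨_, hunit.unit, hxu.symm⟩

namespace ValuationSubring

section

variable {L : Type*} [Field L] (B : ValuationSubring L)

theorem mul_mem_nonunits {b z : L} (hb : b ∈ B) (hz : z ∈ B.nonunits) : b * z ∈ B.nonunits := by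
  rw [mem_nonunits_iff, map_mul] at *
  exact (mul_le_of_le_one_left' ((B.valuation_le_one_iff b).2 hb)).trans_lt hz

theorem div_mem_nonunits_of_mem_of_notMem (M : Submodule B L) {y w : L} (hy : y ∈ M)
    (hw : w ∉ M) : y / w ∈ B.nonunits := by
  rw [mem_nonunits_iff_or]
  refine or_iff_not_imp_left.2 fun hyw hinv => hw ?_
  obtain ⟨hy0, hw0⟩ : y ≠ 0 ∧ w ≠ 0 := by simpa [not_or] using hyw
  have hw_eq : w = (⟨(y / w)⁻¹, hinv⟩ : B) • y := by
    change w = (y / w)⁻¹ * y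
    field_simp
  exact hw_eq ▸ M.smul_mem _ hy

theorem exists_mul_div_mem_of_ne_top {K : Type*} [Field K] [Algebra K L]
    (h : ∀ z : L, ∃ a : K, a ≠ 0 ∧ algebraMap K L a * z ∈ B) {M : Submodule B L} (hM : M ≠ ⊤)
    (x : L) : ∃ e : K, e ≠ 0 ∧ ∀ y ∈ M, algebraMap K L e * y / x ∈ B := by
  obtain ⟨w, hw⟩ : ∃ w, w ∉ M := by
    by_contra! htop
    exact hM (Submodule.eq_top_iff'.2 htop)
  have hw0 : w ≠ 0 := by
    rintro rfl
    exact hw M.zero_mem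
  obtain ⟨e, he0, hew⟩ := h (w / x)
  refine ⟨e, he0, fun y hy => ?_⟩
  rcases eq_or_ne x 0 with rfl | hx0
  · simp
  have h_eq : algebraMap K L e * y / x = algebraMap K L e * (w / x) * (y / w) := by
    field_simp
  exact h_eq ▸ B.mul_mem _ _ hew (nonunits_subset (B.div_mem_nonunits_of_mem_of_notMem M hy hw))

theorem exists_forall_eq_mul_of_isNoetherianRing [IsNoetherianRing B] :
    ∃ π ∈ B.nonunits, ∀ z ∈ B.nonunits, ∃ s ∈ B, z = s * π := by
  obtain ⟨π, hπ⟩ :=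
    (IsBezout.isPrincipal_of_FG _ (IsNoetherian.noetherian (maximalIdeal B))).principal
  rw [Ideal.submodule_span_eq] at hπ
  have hπm : π ∈ maximalIdeal B := hπ ▸ Ideal.mem_span_singleton_self π
  refine ⟨π, coe_mem_nonunits_iff.2 hπm, fun z hz => ?_⟩
  have hz' : (⟨z, nonunits_subset hz⟩ : B) ∈ maximalIdeal B := coe_mem_nonunits_iff.1 hz
  rw [hπ, Ideal.mem_span_singleton'] at hz'
  obtain ⟨s, hs⟩ := hz'
  exact ⟨s, s.2, congrArg Subtype.val hs.symm⟩

theorem exists_eq_mul_of_forall_mul_mem_nonunits [IsNoetherianRing B] {M : Submodule B L}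
    (hM : (1 : L) ∈ M) {q : L} (hq : ∀ y ∈ M, q * y ∈ B.nonunits) :
    ∃ π ∈ B.nonunits, ∃ t : L, (∀ y ∈ M, t * y ∈ B) ∧ q = π * t := by
  rcases eq_or_ne q 0 with rfl | hq0
  · exact ⟨0, B.nonunits.zero_mem, 0, fun y _ => by simp, by simp⟩
  obtain ⟨π, hπ, hgen⟩ := B.exists_forall_eq_mul_of_isNoetherianRing
  obtain ⟨t, -, hqt⟩ := hgen q (by simpa using hq 1 hM)
  have hπ0 : π ≠ 0 := by
    rintro rfl
    exact hq0 (by simpa using hqt)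
  refine ⟨π, hπ, t, fun y hy => ?_, by rw [hqt, mul_comm]⟩
  obtain ⟨s, hs, hqs⟩ := hgen (q * y) (hq y hy)
  have hts : t * y = s := mul_right_cancel₀ hπ0 (by rw [← hqs, hqt]; ring)
  exact hts ▸ hs

variable {K : Type*} [Field K] (A : ValuationSubring K)

theorem exists_div_pow_notMem {v : Valuation K NNReal} (hv : ∀ x : K, v x ≤ 1 ↔ x ∈ A) {ε : A}
    (hε : ε ∈ maximalIdeal A) (hε0 : ε ≠ 0) {c : K} (hc : c ≠ 0) :
    ∃ k : ℕ, c / (ε : K) ^ k ∉ A := by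
  have hequiv : v.IsEquiv A.valuation :=
    Valuation.isEquiv_iff_val_le_one.2 fun {x} => by rw [hv, valuation_le_one_iff]
  have hvε : v ε < 1 := hequiv.lt_one_iff_lt_one.2 ((valuation_lt_one_iff A ε).1 hε)
  obtain ⟨k, hk⟩ := exists_pow_lt_of_lt_one (v.pos_iff.2 hc) hvε
  refine ⟨k, fun hmem => hk.not_ge ?_⟩
  have hεk : 0 < v ((ε : K) ^ k) := v.pos_iff.2 (pow_ne_zero _ (by exact_mod_cast hε0))
  have := (hv _).2 hmem
  rwa [map_div₀, div_le_one₀ hεk, map_pow] at this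

theorem exists_not_pow_dvd {v : Valuation K NNReal} (hv : ∀ x : K, v x ≤ 1 ↔ x ∈ A) {ε : A}
    (hε : ε ∈ maximalIdeal A) (hε0 : ε ≠ 0) {a : A} (ha : a ≠ 0) : ∃ n : ℕ, ¬ ε ^ n ∣ a := by
  obtain ⟨n, hn⟩ := A.exists_div_pow_notMem hv hε hε0 (by exact_mod_cast ha : (a : K) ≠ 0)
  refine ⟨n, fun ⟨s, hs⟩ => hn ?_⟩
  have hεn : (ε : K) ^ n ≠ 0 := pow_ne_zero _ (by exact_mod_cast hε0)
  rw [hs, MulMemClass.coe_mul, SubmonoidClass.coe_pow, mul_div_cancel_left₀ _ hεn]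
  exact s.2

end

section Extension

variable (K L : Type*) [Field K] [Field L] [Algebra K L] (A : ValuationSubring K)
  (B : ValuationSubring L)

def codifferent : Submodule B L where
  carrier := {x | ∀ y ∈ B, Algebra.trace K L (x * y) ∈ A}
  add_mem' {x x'} hx hx' y hy := by
    rw [add_mul, map_add]
    exact A.add_mem _ _ (hx y hy) (hx' y hy)
  zero_mem' y _ := by
    rw [zero_mul, map_zero]
    exact A.zero_mem
  smul_mem' b x hx y hy := by
    change Algebra.trace K L ((b : L) * x * y) ∈ A
    rw [mul_comm (b : L) x, mul_assoc]
    exact hx _ (B.mul_mem _ _ b.2 hy)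

variable {K L A B}

theorem codifferent_ne_top [FiniteDimensional K L] [Algebra.IsSeparable K L] {c : K}
    (hc : c ∉ A) : codifferent K L A B ≠ ⊤ := by
  obtain ⟨z, hz⟩ : ∃ z : L, Algebra.trace K L z ≠ 0 := by
    by_contra! h
    exact Algebra.trace_ne_zero K L (LinearMap.ext h)
  intro htop
  have hw : algebraMap K L (c / Algebra.trace K L z) * z ∈ codifferent K L A B :=
    htop ▸ Submodule.mem_top
  have htr := hw 1 B.one_mem
  rw [mul_one, ← Algebra.smul_def, map_smul, smul_eq_mul, div_mul_cancel₀ _ hz] at htr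
  exact hc htr

theorem algebraMap_mem_iff (hB : ∀ x : L, x ∈ B ↔ IsIntegral A x) (c : K) :
    algebraMap K L c ∈ B ↔ c ∈ A := by
  rw [hB, isIntegral_algebraMap_iff (algebraMap K L).injective, IsIntegrallyClosed.isIntegral_iff]
  exact ⟨fun ⟨y, hy⟩ => hy ▸ y.2, fun hc => ⟨⟨c, hc⟩, rfl⟩⟩

theorem algebraMap_mem_nonunits (hB : ∀ x : L, x ∈ B ↔ IsIntegral A x) {c : A}
    (hc : c ∈ maximalIdeal A) : algebraMap K L c ∈ B.nonunits := by
  rw [B.mem_nonunits_iff_or, ← map_inv₀, algebraMap_mem_iff hB, map_eq_zero]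
  exact A.mem_nonunits_iff_or.1 (coe_mem_nonunits_iff.2 hc)

theorem trace_mem [FiniteDimensional K L] (hB : ∀ x : L, x ∈ B ↔ IsIntegral A x) {z : L}
    (hz : z ∈ B) : Algebra.trace K L z ∈ A := by
  obtain ⟨y, hy⟩ :=
    IsIntegrallyClosed.isIntegral_iff.1 (Algebra.isIntegral_trace (L := K) ((hB z).1 hz))
  exact hy ▸ y.2

theorem exists_algebraMap_mul_mem [FiniteDimensional K L] (hB : ∀ x : L, x ∈ B ↔ IsIntegral A x)
    (z : L) : ∃ a : K, a ≠ 0 ∧ algebraMap K L a * z ∈ B := by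
  have halg : IsAlgebraic A z :=
    (IsFractionRing.isAlgebraic_iff A K L).2 (Algebra.IsAlgebraic.isAlgebraic z)
  obtain ⟨y, hy, hyz⟩ := halg.exists_integral_multiple
  rw [Algebra.smul_def] at hyz
  exact ⟨y, by exact_mod_cast hy, (hB _).2 hyz⟩

theorem mem_codifferent_of_mem [FiniteDimensional K L] (hB : ∀ x : L, x ∈ B ↔ IsIntegral A x)
    {z : L} (hz : z ∈ B) : z ∈ codifferent K L A B :=
  fun _ hy => trace_mem hB (B.mul_mem _ _ hz hy)

theorem mem_differentSet_iff [FiniteDimensional K L] (hB : ∀ x : L, x ∈ B ↔ IsIntegral A x)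
    {d : L} : d ∈ differentSet K L A B ↔ ∀ y ∈ codifferent K L A B, d * y ∈ B :=
  ⟨fun h => h.2, fun h => ⟨by simpa using h 1 (mem_codifferent_of_mem hB B.one_mem), h⟩⟩

theorem isNoetherianRing_of_isIntegral [FiniteDimensional K L] [Algebra.IsSeparable K L]
    [IsNoetherianRing A] (hB : ∀ x : L, x ∈ B ↔ IsIntegral A x) : IsNoetherianRing B := by
  have := integralClosure.isNoetherianRing (A := A) (K := K) L
  have h : (integralClosure A L).toSubring = B.toSubring := Subring.ext fun x => (hB x).symm
  exact isNoetherianRing_of_ringEquiv _ (RingEquiv.subringCongr h)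

theorem algebraMap_mul_trace_div_mul_mem_nonunits [FiniteDimensional K L]
    [Algebra.IsSeparable K L] (hB : ∀ x : L, x ∈ B ↔ IsIntegral A x) {v : Valuation K NNReal}
    (hv : ∀ x : K, v x ≤ 1 ↔ x ∈ A) {ε : A} (hε : ε ∈ maximalIdeal A) (x : L) {y : L}
    (hy : y ∈ codifferent K L A B) :
    algebraMap K L (ε * Algebra.trace K L x) / x * y ∈ B.nonunits := by
  rcases eq_or_ne ε 0 with rfl | hε0
  · simp
  rcases eq_or_ne x 0 with rfl | hx0
  · simp
  set C := codifferent K L A B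
  have hεK : (ε : K) ≠ 0 := by exact_mod_cast hε0
  have hεinv : (ε : K)⁻¹ ∉ A :=
    (A.mem_nonunits_iff_or.1 (coe_mem_nonunits_iff.2 hε)).resolve_left hεK
  obtain ⟨e, he0, he⟩ := B.exists_mul_div_mem_of_ne_top (exists_algebraMap_mul_mem hB)
    (codifferent_ne_top hεinv) x
  obtain ⟨a, ha0, hax⟩ := exists_algebraMap_mul_mem hB x
  obtain ⟨n, hn⟩ : ∃ n : ℕ, algebraMap K L (a / ε ^ n) * x ∉ C := by
    obtain ⟨n, hn⟩ := A.exists_div_pow_notMem hv hε hε0 (mul_ne_zero he0 ha0)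
    refine ⟨n, fun hmem => hn ((algebraMap_mem_iff hB _).1 ?_)⟩
    convert he _ hmem using 1
    rw [map_div₀, map_mul, map_div₀, map_pow]
    field_simp
  obtain ⟨k, hk, hk1⟩ : ∃ k : ℕ,
      algebraMap K L (a / ε ^ k) * x ∈ C ∧ algebraMap K L (a / ε ^ (k + 1)) * x ∉ C := by
    by_contra! h
    exact hn (Nat.rec (by simpa using mem_codifferent_of_mem hB hax) h n)
  have htr : a / ε ^ k * Algebra.trace K L x ∈ A := by
    have := hk 1 B.one_mem
    rwa [mul_one, ← Algebra.smul_def, map_smul, smul_eq_mul] at this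
  convert B.mul_mem_nonunits ((algebraMap_mem_iff hB _).2 htr)
    (B.div_mem_nonunits_of_mem_of_notMem C hy hk1) using 1
  have hεL : algebraMap K L ε ≠ 0 := (map_ne_zero _).2 hεK
  have haL : algebraMap K L a ≠ 0 := (map_ne_zero _).2 ha0
  simp only [map_mul, map_div₀, map_pow]
  field_simp
  ring

theorem exists_algebraMap_mul_trace_eq_mul [FiniteDimensional K L] [Algebra.IsSeparable K L]
    (hB : ∀ x : L, x ∈ B ↔ IsIntegral A x) {v : Valuation K NNReal}
    (hv : ∀ x : K, v x ≤ 1 ↔ x ∈ A) {ε : A} (hε : ε ∈ maximalIdeal A) (x : L) :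
    ∃ δ ∈ B.nonunits, ∃ d ∈ differentSet K L A B,
      algebraMap K L (ε * Algebra.trace K L x) = δ * d * x := by
  have h1 : (1 : L) ∈ codifferent K L A B := mem_codifferent_of_mem hB B.one_mem
  rcases eq_or_ne x 0 with rfl | hx0
  · exact ⟨0, B.nonunits.zero_mem, 0, (mem_differentSet_iff hB).2 fun y _ => by simp, by simp⟩
  rcases ValuationRing.exists_mul_eq_or_maximalIdeal_eq_span hε with
    ⟨c, hc, d, hd, rfl⟩ | hspan
  · refine ⟨algebraMap K L c, algebraMap_mem_nonunits hB hc,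
      algebraMap K L (d * Algebra.trace K L x) / x, (mem_differentSet_iff hB).2 fun y hy =>
        nonunits_subset (algebraMap_mul_trace_div_mul_mem_nonunits hB hv hd x hy), ?_⟩
    simp only [MulMemClass.coe_mul, map_mul]
    field_simp
  rcases eq_or_ne ε 0 with rfl | hε0
  · exact ⟨0, B.nonunits.zero_mem, 0, (mem_differentSet_iff hB).2 fun y _ => by simp, by simp⟩
  have := IsDiscreteValuationRing.of_maximalIdeal_eq_span hε0 hspan
    fun a ha => A.exists_not_pow_dvd hv hε hε0 ha
  have := isNoetherianRing_of_isIntegral (K := K) hB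
  obtain ⟨π, hπ, t, ht, hqt⟩ := B.exists_eq_mul_of_forall_mul_mem_nonunits h1
    fun y hy => algebraMap_mul_trace_div_mul_mem_nonunits hB hv hε x hy
  refine ⟨π, hπ, t, (mem_differentSet_iff hB).2 ht, ?_⟩
  rw [← hqt, div_mul_cancel₀ _ hx0]

end Extension

end ValuationSubring

theorem statement13_general
    (K K' : Type*) [Field K] [Field K']
    [Algebra K K'] [FiniteDimensional K K'] [Algebra.IsSeparable K K']
    (OK : ValuationSubring K) (OK' : ValuationSubring K')
    (hK1 : ¬ IsField ↥OK ∧ ∃ v : Valuation K NNReal, ∀ x : K, v x ≤ 1 ↔ x ∈ OK)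
    (hOK' : ∀ x : K', x ∈ OK' ↔ ∃ P : Polynomial ↥OK, P.Monic ∧
      Polynomial.eval₂ ((algebraMap K K').comp OK.subtype) x P = 0) :
    (∀ x : K', ∀ ε : ↥OK, ε ∈ IsLocalRing.maximalIdeal ↥OK →
      algebraMap K K' ((ε : K) * Algebra.trace K K' x) ∈
        Submodule.span ↥OK' {z : K' | ∃ δ : ↥OK', δ ∈ IsLocalRing.maximalIdeal ↥OK' ∧
          ∃ d ∈ differentSet K K' OK OK', z = (δ : K') * d * x}) ∧
    (∀ a : ↥OK, a ∈ IsLocalRing.maximalIdeal ↥OK →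
      ∀ b : K', (∀ δ : ↥OK', δ ∈ IsLocalRing.maximalIdeal ↥OK' → b * (δ : K') ∈ OK') →
      (Module.finrank K K' : K') * algebraMap K K' (a : K) * b ∈
        differentSet K K' OK OK') := by
  obtain ⟨-, v, hv⟩ := hK1
  have hB : ∀ x : K', x ∈ OK' ↔ IsIntegral OK x := hOK'
  refine ⟨fun x ε hε => ?_, fun a ha b hb =>
    (ValuationSubring.mem_differentSet_iff hB).2 fun x hx => ?_⟩
  · obtain ⟨δ, hδ, d, hd, h⟩ := ValuationSubring.exists_algebraMap_mul_trace_eq_mul hB hv hε x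
    exact Submodule.subset_span
      ⟨⟨δ, OK'.nonunits_subset hδ⟩, ValuationSubring.coe_mem_nonunits_iff.1 hδ, d, hd, h⟩
  obtain ⟨δ, hδ, d, hd, h⟩ := ValuationSubring.exists_algebraMap_mul_trace_eq_mul hB hv ha 1
  have htr1 : Algebra.trace K K' 1 = Module.finrank K K' := by
    rw [← map_one (algebraMap K K'), Algebra.trace_algebraMap, nsmul_one]
  have hδdx : δ * (d * x) ∈ OK'.nonunits := by
    rw [mul_comm]
    exact OK'.mul_mem_nonunits (hd.2 x hx) hδ
  convert hb ⟨_, OK'.nonunits_subset hδdx⟩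
    (ValuationSubring.coe_mem_nonunits_iff.1 hδdx) using 1
  change _ = b * (δ * (d * x))
  rw [← mul_assoc δ, ← mul_one (δ * d), ← h, htr1, map_mul, map_natCast]
  ring

/-- Let `K → K'` be a finite separable extension of Henselian valuation fields
of height `1`.  Then (i) for every `x ∈ K'` and `ε ∈ m_K` one has
`ε·Tr_{K'/K}(x) ∈ m_{K'}·𝔇_{K'/K}·x` (the `O_{K'}`-submodule of `K'` generated by the products
`δ·d·x` with `δ ∈ m_{K'}` and `d ∈ 𝔇_{K'/K}`); (ii) `[K':K]·m_K·m_{K'}⁻¹ ⊆ 𝔇_{K'/K}`. -/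
theorem statement13
    (K K' : Type*) [Field K] [Field K']
    [Algebra K K'] [FiniteDimensional K K'] [Algebra.IsSeparable K K']
    (OK : ValuationSubring K) (OK' : ValuationSubring K')
    [HenselianLocalRing ↥OK]
    (hK1 : ¬ IsField ↥OK ∧ ∃ v : Valuation K NNReal, ∀ x : K, v x ≤ 1 ↔ x ∈ OK)
    (hOK' : ∀ x : K', x ∈ OK' ↔ ∃ P : Polynomial ↥OK, P.Monic ∧
      Polynomial.eval₂ ((algebraMap K K').comp OK.subtype) x P = 0) :
    (∀ x : K', ∀ ε : ↥OK, ε ∈ IsLocalRing.maximalIdeal ↥OK →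
      algebraMap K K' ((ε : K) * Algebra.trace K K' x) ∈
        Submodule.span ↥OK' {z : K' | ∃ δ : ↥OK', δ ∈ IsLocalRing.maximalIdeal ↥OK' ∧
          ∃ d ∈ differentSet K K' OK OK', z = (δ : K') * d * x}) ∧
    (∀ a : ↥OK, a ∈ IsLocalRing.maximalIdeal ↥OK →
      ∀ b : K', (∀ δ : ↥OK', δ ∈ IsLocalRing.maximalIdeal ↥OK' → b * (δ : K') ∈ OK') →
      (Module.finrank K K' : K') * algebraMap K K' (a : K) * b ∈
        differentSet K K' OK OK') :=
  statement13_general K K' OK OK' hK1 hOK'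
end

section
/- Let K → K' be a finite Galois extension of Henselian valuation fields of height 1 with Galois group G = Gal(K'/K), and let π ∈ O_K. The action of G on K' restricts to O_{K'} and induces an action on O_{K'}/πO_{K'}, making it a ℤ[G]-module. Let c ∈ O_K be an element lying in the ideal of O_{K'} generated by the products ε·d with ε ∈ m̃_K and d ∈ 𝔇_{K'/K}. Then the natural map O_K/πO_K → (O_{K'}/πO_{K'})^G = H^0(G, O_{K'}/πO_{K'}) is injective, c annihilates its cokernel, and c annihilates the group cohomology H^q(G, O_{K'}/πO_{K'}) for every integer q ≥ 1. -/
/-- The differential of the complex of inhomogeneous cochains of a group `G` with coefficients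
in an abelian group `M` equipped with an action `ρ` of `G` (the same formula as in Mathlib's
`groupCohomology.inhomogeneousCochains`). -/
def cochainD {G M : Type*} [Monoid G] [AddCommGroup M] (ρ : G → M → M) {n : ℕ}
    (f : (Fin n → G) → M) : (Fin (n + 1) → G) → M :=
  fun g => ρ (g 0) (f fun i => g i.succ) +
    ∑ j : Fin (n + 1), (-1 : ℤ) ^ ((j : ℕ) + 1) • f (Fin.contractNth j (· * ·) g)

namespace Fin

variable {α : Type*} (op : α → α → α) {n : ℕ}

lemma contractNth_last (g : Fin (n + 1) → α) : contractNth (last n) op g = init g := by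
  funext k
  exact contractNth_apply_of_lt _ _ _ _ k.isLt

lemma snoc_comp_succ (g : Fin (n + 1) → α) (x : α) :
    (fun i : Fin (n + 1) => (snoc g x : Fin (n + 2) → α) i.succ) =
      snoc (fun i : Fin n => g i.succ) x := by
  funext k
  cases k using lastCases with
  | last => rw [succ_last, snoc_last, snoc_last]
  | cast k => rw [succ_castSucc, snoc_castSucc, snoc_castSucc]

lemma contractNth_castSucc_snoc_of_lt (j : Fin (n + 1)) (hj : (j : ℕ) < n)
    (g : Fin (n + 1) → α) (x : α) :
    contractNth j.castSucc op (snoc g x : Fin (n + 2) → α) = snoc (contractNth j op g) x := by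
  funext k
  cases k using lastCases with
  | last =>
    rw [contractNth_apply_of_gt _ _ _ _ (by simpa using hj), succ_last, snoc_last, snoc_last]
  | cast k =>
    rcases lt_trichotomy (k : ℕ) j with h | h | h
    · rw [contractNth_apply_of_lt _ _ _ _ (by simpa using h), snoc_castSucc, snoc_castSucc,
        contractNth_apply_of_lt _ _ _ _ h]
    · rw [contractNth_apply_of_eq _ _ _ _ (by simpa using h), snoc_castSucc, succ_castSucc,
        snoc_castSucc, snoc_castSucc, contractNth_apply_of_eq _ _ _ _ h]
    · rw [contractNth_apply_of_gt _ _ _ _ (by simpa using h), succ_castSucc, snoc_castSucc,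
        snoc_castSucc, contractNth_apply_of_gt _ _ _ _ h]

lemma contractNth_castSucc_last_snoc (g : Fin (n + 1) → α) (x : α) :
    contractNth (last n).castSucc op (snoc g x : Fin (n + 2) → α) =
      snoc (init g) (op (g (last n)) x) := by
  funext k
  cases k using lastCases with
  | last =>
    rw [contractNth_apply_of_eq _ _ _ _ (by simp), snoc_castSucc, succ_last, snoc_last, snoc_last]
  | cast k =>
    rw [contractNth_apply_of_lt _ _ _ _ (by simp), snoc_castSucc, snoc_castSucc]
    rfl

lemma partialProd_contractNth_last_of_lt {G : Type*} [Monoid G] (j : Fin (n + 1))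
    (hj : (j : ℕ) < n) (g : Fin (n + 1) → G) :
    partialProd (contractNth j (· * ·) g) (last n) = partialProd g (last (n + 1)) := by
  rw [partialProd_contractNth, Function.comp_apply, succAbove_of_le_castSucc _ _ (by
    simpa [le_iff_val_le_val] using hj), succ_last]

lemma partialProd_init_mul_last {G : Type*} [Monoid G] (g : Fin (n + 1) → G) :
    partialProd (init g) (last n) * g (last n) = partialProd g (last (n + 1)) := by
  rw [partialProd_init, ← succ_last, partialProd_succ]

end Fin

section CochainD

variable {G M : Type*}

lemma cochainD_snoc [Monoid G] [AddCommGroup M] (ρ : G → M → M) {n : ℕ}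
    (f : (Fin (n + 1) → G) → M) (g : Fin (n + 1) → G) (τ : G) :
    cochainD ρ f (Fin.snoc g τ) = ρ (g 0) (f (Fin.snoc (fun i => g i.succ) τ)) +
      ∑ j : Fin (n + 1), (-1 : ℤ) ^ ((j : ℕ) + 1) •
        f (Fin.contractNth j.castSucc (· * ·) (Fin.snoc g τ)) + (-1 : ℤ) ^ n • f g := by
  rw [cochainD, Fin.sum_univ_castSucc, Fin.snoc_apply_zero, Fin.snoc_comp_succ,
    Fin.contractNth_last, Fin.init_snoc, Fin.val_last, ← add_assoc]
  simp [pow_succ]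

lemma cochainD_zsmul [Monoid G] [AddCommGroup M] {ρ : G → M → M}
    (hadd : ∀ σ x y, ρ σ (x + y) = ρ σ x + ρ σ y) {n : ℕ} (z : ℤ) (f : (Fin n → G) → M) :
    cochainD ρ (z • f) = z • cochainD ρ f := by
  funext g
  have hρz : ∀ m, ρ (g 0) (z • m) = z • ρ (g 0) m :=
    map_zsmul (AddMonoidHom.mk' (ρ (g 0)) (hadd (g 0))) z
  simp only [cochainD, Pi.smul_apply, hρz, smul_add, Finset.smul_sum, smul_comm z]

end CochainD

section CochainContraction

variable {G M : Type*} [Group G] [Fintype G] [Ring M]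

def cochainContraction (χ : G → M) {n : ℕ} (f : (Fin (n + 1) → G) → M) : (Fin n → G) → M :=
  fun g => ∑ τ, χ (Fin.partialProd g (Fin.last n) * τ) * f (Fin.snoc g τ)

lemma cochainContraction_contractNth (χ : G → M) {n : ℕ} (f : (Fin (n + 1) → G) → M)
    (g : Fin (n + 1) → G) (j : Fin (n + 1)) :
    cochainContraction χ f (Fin.contractNth j (· * ·) g) =
      ∑ τ, χ (Fin.partialProd g (Fin.last (n + 1)) * τ) *
        f (Fin.contractNth j.castSucc (· * ·) (Fin.snoc g τ)) := by
  obtain rfl | hj := eq_or_ne j (Fin.last n)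
  · rw [Fin.contractNth_last, cochainContraction,
      ← Equiv.sum_comp (Equiv.mulLeft (g (Fin.last n)))]
    simp only [Equiv.coe_mulLeft, Fin.contractNth_castSucc_last_snoc, ← mul_assoc,
      Fin.partialProd_init_mul_last]
  · have hj' : (j : ℕ) < n := Fin.val_lt_last hj
    simp only [cochainContraction, Fin.partialProd_contractNth_last_of_lt j hj',
      Fin.contractNth_castSucc_snoc_of_lt _ j hj']

lemma cochainD_cochainContraction {ρ : G → M → M}
    (hadd : ∀ σ x y, ρ σ (x + y) = ρ σ x + ρ σ y) {χ : G → M}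
    (hequiv : ∀ σ τ m, ρ σ (χ τ * m) = χ (σ * τ) * ρ σ m) {n : ℕ}
    (f : (Fin (n + 1) → G) → M) (g : Fin (n + 1) → G) :
    cochainD ρ (cochainContraction χ f) g =
      ∑ τ, χ (Fin.partialProd g (Fin.last (n + 1)) * τ) *
        (ρ (g 0) (f (Fin.snoc (fun i => g i.succ) τ)) +
          ∑ j : Fin (n + 1), (-1 : ℤ) ^ ((j : ℕ) + 1) •
            f (Fin.contractNth j.castSucc (· * ·) (Fin.snoc g τ))) := by
  have hρ_sum : ρ (g 0) (cochainContraction χ f fun i => g i.succ) =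
      ∑ τ, χ (Fin.partialProd g (Fin.last (n + 1)) * τ) *
        ρ (g 0) (f (Fin.snoc (fun i => g i.succ) τ)) := by
    have hρ_map_sum : ∀ F : G → M, ρ (g 0) (∑ τ, F τ) = ∑ τ, ρ (g 0) (F τ) :=
      fun F => map_sum (AddMonoidHom.mk' (ρ (g 0)) (hadd (g 0))) F _
    simp only [cochainContraction, hρ_map_sum, hequiv, ← Fin.succ_last, Fin.partialProd_succ',
      mul_assoc]
    rfl
  rw [cochainD, hρ_sum]
  simp only [cochainContraction_contractNth, mul_add, Finset.sum_add_distrib, Finset.mul_sum,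
    mul_smul_comm, Finset.smul_sum]
  rw [Finset.sum_comm (s := Finset.univ (α := Fin (n + 1)))]

theorem exists_cochainD_eq_mul_of_cochainD_eq_zero {ρ : G → M → M}
    (hadd : ∀ σ x y, ρ σ (x + y) = ρ σ x + ρ σ y) {χ : G → M}
    (hequiv : ∀ σ τ m, ρ σ (χ τ * m) = χ (σ * τ) * ρ σ m) {C : M}
    (hsum : ∀ u, ∑ τ, χ (u * τ) = C) {n : ℕ} (f : (Fin (n + 1) → G) → M)
    (hf : cochainD ρ f = 0) :
    ∃ g : (Fin n → G) → M, (fun γ => C * f γ) = cochainD ρ g := by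
  refine ⟨(-1 : ℤ) ^ (n + 1) • cochainContraction χ f, ?_⟩
  funext γ
  have hcocycle : ∀ τ, ρ (γ 0) (f (Fin.snoc (fun i => γ i.succ) τ)) +
      ∑ j : Fin (n + 1), (-1 : ℤ) ^ ((j : ℕ) + 1) •
        f (Fin.contractNth j.castSucc (· * ·) (Fin.snoc γ τ)) = (-1 : ℤ) ^ (n + 1) • f γ := by
    intro τ
    rw [pow_succ, mul_neg_one, neg_smul]
    exact eq_neg_of_add_eq_zero_left ((cochainD_snoc ρ f γ τ).symm.trans (congrFun hf _))
  rw [cochainD_zsmul hadd, Pi.smul_apply, cochainD_cochainContraction hadd hequiv]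
  simp only [hcocycle]
  rw [← Finset.sum_mul, hsum, mul_smul_comm, smul_smul, ← pow_add, ← two_mul, pow_mul,
    neg_one_sq, one_pow, one_smul]

lemma mul_eq_sum_of_forall_fixed {ρ : G → M → M} {χ : G → M}
    (hequiv : ∀ σ τ m, ρ σ (χ τ * m) = χ (σ * τ) * ρ σ m) {C : M}
    (hsum : ∀ u, ∑ τ, χ (u * τ) = C) {y : M} (hy : ∀ σ, ρ σ y = y) :
    C * y = ∑ σ, ρ σ (χ 1 * y) := by
  simp only [← hsum 1, Finset.sum_mul, one_mul, hequiv, mul_one, hy]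

end CochainContraction

namespace ValuationSubring

variable {L : Type*} [Field L]

lemma valuation_mul_lt_one_of_mem_span (O : ValuationSubring L) {S : Set L} {x y : L}
    (hS : ∀ z ∈ S, O.valuation (z * x) < 1) (hy : y ∈ Submodule.span O S) :
    O.valuation (y * x) < 1 := by
  induction hy using Submodule.span_induction with
  | mem z hz => exact hS z hz
  | zero => simp
  | add y z _ _ hy hz => rw [add_mul]; exact Valuation.map_add_lt _ hy hz
  | smul a y _ hy =>
    rw [Subring.smul_def, smul_eq_mul, mul_assoc, map_mul]
    exact Right.mul_lt_one_of_le_of_lt (O.valuation_le_one a) hy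

lemma valuation_le_of_valuation_lt_one (O : ValuationSubring L) {p : O}
    (hp : IsLocalRing.maximalIdeal O = Ideal.span {p}) {x : L} (hx : O.valuation x < 1) :
    O.valuation x ≤ O.valuation (p : L) := by
  have hxm : (⟨x, O.mem_of_valuation_le_one x hx.le⟩ : O) ∈ IsLocalRing.maximalIdeal O :=
    (O.valuation_lt_one_iff _).mpr hx
  rw [hp, Ideal.mem_span_singleton'] at hxm
  obtain ⟨r, hr⟩ := hxm
  calc O.valuation x = O.valuation (r : L) * O.valuation (p : L) := by
        rw [← map_mul, ← Subring.coe_mul, hr]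
    _ ≤ O.valuation (p : L) := mul_le_of_le_one_left' (O.valuation_le_one r)

end ValuationSubring

section IntegralClosure

variable {K K' : Type*} [Field K] [Field K'] [Algebra K K']
  {OK : ValuationSubring K} {OK' : ValuationSubring K'}

lemma mem_of_algebraMap_mem
    (hOK' : ∀ x : K', x ∈ OK' ↔ ∃ P : Polynomial OK, P.Monic ∧
      Polynomial.eval₂ ((algebraMap K K').comp OK.subtype) x P = 0)
    {x : K} (hx : algebraMap K K' x ∈ OK') : x ∈ OK := by
  obtain ⟨P, hmonic, heval⟩ := (hOK' _).mp hx
  have hint : IsIntegral OK x := ⟨P, hmonic, (algebraMap K K').injective <| by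
    rw [map_zero, Polynomial.hom_eval₂]; exact heval⟩
  obtain ⟨y, rfl⟩ := IsIntegrallyClosed.isIntegral_iff.mp hint
  exact y.2

lemma valuation_algebraMap_lt_one
    (hOK' : ∀ x : K', x ∈ OK' ↔ ∃ P : Polynomial OK, P.Monic ∧
      Polynomial.eval₂ ((algebraMap K K').comp OK.subtype) x P = 0)
    {μ : OK} (hμ : μ ∈ IsLocalRing.maximalIdeal OK) :
    OK'.valuation (algebraMap K K' μ) < 1 := by
  rw [OK.valuation_lt_one_iff] at hμ
  obtain hμ0 | hμ0 := eq_or_ne (μ : K) 0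
  · simp [hμ0]
  by_contra! h
  have hinv : (μ : K)⁻¹ ∈ OK := mem_of_algebraMap_mem hOK' <| by
    rw [map_inv₀, ← OK'.valuation_le_one_iff, map_inv₀]
    exact inv_le_one_of_one_le₀ h
  rw [← OK.valuation_le_one_iff, map_inv₀,
    inv_le_one₀ (zero_lt_iff.mpr ((Valuation.ne_zero_iff _).mpr hμ0))] at hinv
  exact hinv.not_gt hμ

lemma dvd_of_algebraMap_dvd
    (hOK' : ∀ x : K', x ∈ OK' ↔ ∃ P : Polynomial OK, P.Monic ∧
      Polynomial.eval₂ ((algebraMap K K').comp OK.subtype) x P = 0)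
    [Algebra OK OK'] (hcomp : ∀ x : OK, ((algebraMap OK OK' x : OK') : K') = algebraMap K K' x)
    {π x : OK} (h : algebraMap OK OK' π ∣ algebraMap OK OK' x) : π ∣ x := by
  obtain ⟨y, hy⟩ := h
  have hy' : algebraMap K K' x = algebraMap K K' π * y := by
    rw [← hcomp, ← hcomp, hy, Subring.coe_mul]
  obtain hπ | hπ := eq_or_ne (π : K) 0
  · rw [hπ, map_zero, zero_mul, map_eq_zero_iff _ (algebraMap K K').injective] at hy'
    exact ⟨0, Subtype.ext (by simp [hy'])⟩
  have hquot : (x : K) / π ∈ OK := mem_of_algebraMap_mem hOK' <| by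
    rw [map_div₀, hy', mul_div_cancel_left₀ _ ((map_ne_zero _).mpr hπ)]
    exact y.2
  exact ⟨⟨_, hquot⟩, Subtype.ext (by simp [mul_div_cancel₀ _ hπ])⟩

end IntegralClosure

section QuotientAction

variable {G A : Type*} [CommRing A] {I : Ideal A} {r : G → A →+* A} {ρ : G → A ⧸ I → A ⧸ I}

lemma apply_add_of_apply_mk
    (hρ : ∀ σ x, ρ σ (Ideal.Quotient.mk I x) = Ideal.Quotient.mk I (r σ x))
    (σ : G) (x y : A ⧸ I) : ρ σ (x + y) = ρ σ x + ρ σ y := by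
  obtain ⟨x, rfl⟩ := Ideal.Quotient.mk_surjective x
  obtain ⟨y, rfl⟩ := Ideal.Quotient.mk_surjective y
  simp only [← map_add, hρ]

lemma apply_mk_mul_of_apply_mk
    (hρ : ∀ σ x, ρ σ (Ideal.Quotient.mk I x) = Ideal.Quotient.mk I (r σ x))
    (σ : G) (z : A) (m : A ⧸ I) :
    ρ σ (Ideal.Quotient.mk I z * m) = Ideal.Quotient.mk I (r σ z) * ρ σ m := by
  obtain ⟨x, rfl⟩ := Ideal.Quotient.mk_surjective m
  rw [← map_mul, hρ, hρ, map_mul, map_mul]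

end QuotientAction

section Trace

variable {K K' : Type*} [Field K] [Field K'] [Algebra K K']
  {OK : ValuationSubring K} {OK' : ValuationSubring K'}

lemma algebraMap_mem_of_mem
    (hOK' : ∀ x : K', x ∈ OK' ↔ ∃ P : Polynomial OK, P.Monic ∧
      Polynomial.eval₂ ((algebraMap K K').comp OK.subtype) x P = 0)
    {x : K} (hx : x ∈ OK) : algebraMap K K' x ∈ OK' :=
  (hOK' _).mpr ⟨Polynomial.X - Polynomial.C ⟨x, hx⟩, Polynomial.monic_X_sub_C _, by simp⟩

lemma trace_algebraMap_mul_mem {x : K}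
    (hx : ∀ y ∈ OK', OK.valuation x * OK.valuation (Algebra.trace K K' y) ≤ 1)
    {y : K'} (hy : y ∈ OK') : Algebra.trace K K' (algebraMap K K' x * y) ∈ OK := by
  rw [← Algebra.smul_def, map_smul, smul_eq_mul, ← OK.valuation_le_one_iff, map_mul]
  exact hx y hy

lemma valuation_trace_lt_of_forall_trace_ne
    (hOK' : ∀ x : K', x ∈ OK' ↔ ∃ P : Polynomial OK, P.Monic ∧
      Polynomial.eval₂ ((algebraMap K K').comp OK.subtype) x P = 0)
    {c : K} (hc0 : c ≠ 0) (h : ∀ a ∈ OK', Algebra.trace K K' a ≠ c) :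
    ∀ w ∈ OK', OK.valuation (Algebra.trace K K' w) < OK.valuation c := by
  intro w hw
  by_contra! hle
  have ht0 : Algebra.trace K K' w ≠ 0 := by
    rintro h0
    rw [h0, map_zero, le_zero_iff, Valuation.zero_iff] at hle
    exact hc0 hle
  have hquot : c / Algebra.trace K K' w ∈ OK := by
    rw [← OK.valuation_le_one_iff, map_div₀]
    exact div_le_one_of_le₀ hle zero_le
  refine h _ (mul_mem (algebraMap_mem_of_mem hOK' hquot) hw) ?_
  rw [← Algebra.smul_def, map_smul, smul_eq_mul, div_mul_cancel₀ _ ht0]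

lemma exists_mul_eq_of_mem_tildeMax (hnf : ¬ IsField OK) {c : K} (hc0 : c ≠ 0)
    (htr : ∀ w ∈ OK', OK.valuation (Algebra.trace K K' w) < OK.valuation c)
    {ε : OK} (hε : ε ∈ tildeMax OK) :
    ∃ μ ∈ IsLocalRing.maximalIdeal OK, ∃ x : K,
      (∀ y ∈ OK', OK.valuation x * OK.valuation (Algebra.trace K K' y) ≤ 1) ∧
        (ε : K) * c⁻¹ = μ * x := by
  have hvc : 0 < OK.valuation c := zero_lt_iff.mpr ((Valuation.ne_zero_iff _).mpr hc0)
  unfold tildeMax at hε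
  split_ifs at hε with hprin
  · obtain ⟨p, hp⟩ := hprin.principal
    have hp0 : (p : K) ≠ 0 := fun h0 => hnf <| by
      rw [IsLocalRing.isField_iff_maximalIdeal_eq, hp, show p = 0 from Subtype.ext h0,
        Submodule.span_zero_singleton]
    refine ⟨ε * p, Ideal.mul_mem_left _ _ (hp ▸ Ideal.mem_span_singleton_self p), (c * p)⁻¹,
      fun y hy => ?_, by push_cast; field_simp⟩
    have hdiv := OK.valuation_le_of_valuation_lt_one hp (x := Algebra.trace K K' y / c)
      (by rw [map_div₀]; exact (div_lt_one₀ hvc).mpr (htr y hy))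
    rw [map_div₀, div_le_iff₀ hvc] at hdiv
    rw [map_inv₀, map_mul, inv_mul_le_one₀ (mul_pos hvc
      (zero_lt_iff.mpr ((Valuation.ne_zero_iff _).mpr hp0))), mul_comm]
    exact hdiv
  · refine ⟨ε, hε, c⁻¹, fun y hy => ?_, rfl⟩
    rw [map_inv₀, inv_mul_le_one₀ hvc]
    exact (htr y hy).le

theorem exists_mem_trace_eq
    (hOK' : ∀ x : K', x ∈ OK' ↔ ∃ P : Polynomial OK, P.Monic ∧
      Polynomial.eval₂ ((algebraMap K K').comp OK.subtype) x P = 0)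
    (hnf : ¬ IsField OK) {c : K}
    (hc : algebraMap K K' c ∈ Submodule.span OK'
      {z : K' | ∃ ε : OK, ε ∈ tildeMax OK ∧ ∃ d ∈ differentSet K K' OK OK',
        z = algebraMap K K' (ε : K) * d}) :
    ∃ a ∈ OK', Algebra.trace K K' a = c := by
  by_contra! h
  have hc0 : c ≠ 0 := by
    rintro rfl
    exact h 0 OK'.zero_mem (map_zero _)
  have htr := valuation_trace_lt_of_forall_trace_ne hOK' hc0 h
  have hlt : OK'.valuation (algebraMap K K' c * algebraMap K K' c⁻¹) < 1 := by
    refine OK'.valuation_mul_lt_one_of_mem_span ?_ hc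
    rintro _ ⟨ε, hε, d, hd, rfl⟩
    obtain ⟨μ, hμ, x, hx, hεμ⟩ := exists_mul_eq_of_mem_tildeMax hnf hc0 htr hε
    have hdx : d * algebraMap K K' x ∈ OK' :=
      hd.2 _ fun y hy => trace_algebraMap_mul_mem hx hy
    have hεμ' := congrArg (algebraMap K K') hεμ
    rw [map_mul, map_mul] at hεμ'
    calc OK'.valuation (algebraMap K K' ε * d * algebraMap K K' c⁻¹)
        = OK'.valuation (d * algebraMap K K' x) * OK'.valuation (algebraMap K K' μ) := by
          rw [← map_mul]
          congr 1
          linear_combination d * hεμ'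
      _ < 1 := Right.mul_lt_one_of_le_of_lt (OK'.valuation_le_one ⟨_, hdx⟩)
          (valuation_algebraMap_lt_one hOK' hμ)
  rw [← map_mul, mul_inv_cancel₀ hc0, map_one, map_one] at hlt
  exact lt_irrefl _ hlt

variable [FiniteDimensional K K'] [IsGalois K K']

lemma trace_mem
    (hOK' : ∀ x : K', x ∈ OK' ↔ ∃ P : Polynomial OK, P.Monic ∧
      Polynomial.eval₂ ((algebraMap K K').comp OK.subtype) x P = 0)
    (hstab : ∀ (σ : K' ≃ₐ[K] K') (y : K'), y ∈ OK' → σ y ∈ OK') {w : K'} (hw : w ∈ OK') :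
    Algebra.trace K K' w ∈ OK :=
  mem_of_algebraMap_mem hOK' <| by
    rw [trace_eq_sum_automorphisms]
    exact sum_mem fun σ _ => hstab σ w hw

lemma sum_restrict_eq_algebraMap_trace
    (hOK' : ∀ x : K', x ∈ OK' ↔ ∃ P : Polynomial OK, P.Monic ∧
      Polynomial.eval₂ ((algebraMap K K').comp OK.subtype) x P = 0)
    (hstab : ∀ (σ : K' ≃ₐ[K] K') (y : K'), y ∈ OK' → σ y ∈ OK')
    [Algebra OK OK'] (hcomp : ∀ x : OK, ((algebraMap OK OK' x : OK') : K') = algebraMap K K' x)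
    (w : OK') :
    ∑ σ : K' ≃ₐ[K] K', (σ : K' →+* K').restrict OK' OK' (hstab σ) w =
      algebraMap OK OK' ⟨Algebra.trace K K' w, trace_mem hOK' hstab w.2⟩ := by
  apply Subtype.ext
  rw [hcomp, trace_eq_sum_automorphisms]
  push_cast
  rfl

end Trace

/-- Let `K → K'` be a finite Galois extension of Henselian valuation fields of
height `1` with Galois group `G`, `π ∈ O_K`, and `c ∈ O_K` lying in the ideal of `O_{K'}`
generated by `m̃_K·𝔇_{K'/K}`.  Then the natural map `O_K/π → H⁰(G, O_{K'}/π)` is injective with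
cokernel killed by `c`, and `c` kills `H^q(G, O_{K'}/π)` for all `q ≥ 1` (expressed via the
complex of inhomogeneous cochains). -/
theorem statement15
    (K K' : Type*) [Field K] [Field K']
    [Algebra K K'] [FiniteDimensional K K'] [IsGalois K K']
    (OK : ValuationSubring K) (OK' : ValuationSubring K')
    (hK1 : ¬ IsField ↥OK ∧ ∃ v : Valuation K NNReal, ∀ x : K, v x ≤ 1 ↔ x ∈ OK)
    (hOK' : ∀ x : K', x ∈ OK' ↔ ∃ P : Polynomial ↥OK, P.Monic ∧
      Polynomial.eval₂ ((algebraMap K K').comp OK.subtype) x P = 0)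
    (hstab : ∀ (σ : K' ≃ₐ[K] K') (y : K'), y ∈ OK' → σ y ∈ OK')
    [Algebra ↥OK ↥OK']
    (hcomp : ∀ x : ↥OK, ((algebraMap ↥OK ↥OK' x : ↥OK') : K') = algebraMap K K' (x : K))
    (π : ↥OK)
    (c : ↥OK)
    (hc : algebraMap K K' (c : K) ∈ Submodule.span ↥OK'
      {z : K' | ∃ ε : ↥OK, ε ∈ tildeMax OK ∧ ∃ d ∈ differentSet K K' OK OK',
        z = algebraMap K K' (ε : K) * d})
    (ρ : (K' ≃ₐ[K] K') →
      (↥OK' ⧸ Ideal.span {algebraMap ↥OK ↥OK' π}) →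
      (↥OK' ⧸ Ideal.span {algebraMap ↥OK ↥OK' π}))
    (hρ : ∀ (σ : K' ≃ₐ[K] K') (x : ↥OK'),
      ρ σ (Ideal.Quotient.mk (Ideal.span {algebraMap ↥OK ↥OK' π}) x) =
        Ideal.Quotient.mk (Ideal.span {algebraMap ↥OK ↥OK' π})
          ⟨σ (x : K'), hstab σ (x : K') x.2⟩) :
    Function.Injective
      (Ideal.quotientMap (Ideal.span {algebraMap ↥OK ↥OK' π}) (algebraMap ↥OK ↥OK')
        (by
          rw [Ideal.span_le, Set.singleton_subset_iff, SetLike.mem_coe, Ideal.mem_comap]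
          exact Ideal.subset_span (Set.mem_singleton _))) ∧
    (∀ y : ↥OK' ⧸ Ideal.span {algebraMap ↥OK ↥OK' π},
      (∀ σ : K' ≃ₐ[K] K', ρ σ y = y) →
      ∃ x : ↥OK ⧸ Ideal.span {π},
        Ideal.Quotient.mk (Ideal.span {algebraMap ↥OK ↥OK' π}) (algebraMap ↥OK ↥OK' c) * y =
          Ideal.quotientMap (Ideal.span {algebraMap ↥OK ↥OK' π}) (algebraMap ↥OK ↥OK')
            (by
              rw [Ideal.span_le, Set.singleton_subset_iff, SetLike.mem_coe, Ideal.mem_comap]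
              exact Ideal.subset_span (Set.mem_singleton _)) x) ∧
    (∀ (q : ℕ)
      (f : (Fin (q + 1) → (K' ≃ₐ[K] K')) → ↥OK' ⧸ Ideal.span {algebraMap ↥OK ↥OK' π}),
      cochainD ρ f = 0 →
      ∃ g : (Fin q → (K' ≃ₐ[K] K')) → ↥OK' ⧸ Ideal.span {algebraMap ↥OK ↥OK' π},
        (fun γ => Ideal.Quotient.mk (Ideal.span {algebraMap ↥OK ↥OK' π})
            (algebraMap ↥OK ↥OK' c) * f γ) = cochainD ρ g) := by
  obtain ⟨a, ha, hTa⟩ := exists_mem_trace_eq hOK' hK1.1 hc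
  let r (σ : K' ≃ₐ[K] K') : OK' →+* OK' := (σ : K' →+* K').restrict OK' OK' (hstab σ)
  have hρr : ∀ σ x, ρ σ (Ideal.Quotient.mk _ x) = Ideal.Quotient.mk _ (r σ x) := hρ
  let χ (σ : K' ≃ₐ[K] K') := Ideal.Quotient.mk (Ideal.span {algebraMap OK OK' π}) (r σ ⟨a, ha⟩)
  have hequiv : ∀ σ τ m, ρ σ (χ τ * m) = χ (σ * τ) * ρ σ m :=
    fun σ τ => apply_mk_mul_of_apply_mk hρr σ _
  have hsum : ∀ u, ∑ τ, χ (u * τ) = Ideal.Quotient.mk _ (algebraMap OK OK' c) := by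
    intro u
    rw [Fintype.sum_equiv (Equiv.mulLeft u) (fun τ => χ (u * τ)) χ fun _ => rfl, ← map_sum,
      sum_restrict_eq_algebraMap_trace hOK' hstab hcomp]
    simp only [hTa]
  refine ⟨Ideal.quotientMap_injective' fun x hx => ?_, fun y hy => ?_,
    fun q f hf => exists_cochainD_eq_mul_of_cochainD_eq_zero
      (apply_add_of_apply_mk hρr) hequiv hsum f hf⟩
  · rw [Ideal.mem_comap, Ideal.mem_span_singleton] at hx
    exact Ideal.mem_span_singleton.mpr (dvd_of_algebraMap_dvd hOK' hcomp hx)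
  · obtain ⟨w, rfl⟩ := Ideal.Quotient.mk_surjective y
    refine ⟨Ideal.Quotient.mk _ ⟨_, trace_mem hOK' hstab (mul_mem ha w.2)⟩, ?_⟩
    rw [mul_eq_sum_of_forall_fixed hequiv hsum hy, Ideal.quotientMap_mk, ← map_mul]
    have hχw : r 1 ⟨a, ha⟩ * w = ⟨a * w, mul_mem ha w.2⟩ := rfl
    simp only [hρr, ← map_sum, hχw]
    exact congrArg _ (sum_restrict_eq_algebraMap_trace hOK' hstab hcomp _)
end
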